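/- arXiv:2104.07416 — 6 statements merged into one kernel-verified Lean document; each statement's English description precedes it below -/
import Mathlib

section
/- Let G be an (m,n)-colored mixed graph with maximum degree Δ, where (m,n) ≠ (0,1), and let G² be the simple graph on V(G) in which two vertices are adjacent iff they are adjacent in G or joined by a special 2-path (a 2-path uwv with σ(uw) ≠ σ(wv)). Then G² is (⌊(2m+n−1)Δ²/(2m+n)⌋ + Δ)-degenerate. -/
/-!
Count the ordered pairs `(v, u)` of a finite vertex set `X` such that `v` sees `u`.
Adjacent pairs number at most `Δ |X|`. A special 2-path `v - w - u` is charged to its middle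
vertex `w`: if `w` has `d` neighbours in `X`, their labels towards `w` take at most
`k = 2m + n` values, so by Cauchy–Schwarz at most `(k - 1) d² / k ≤ (k - 1) Δ d / k` ordered
pairs of them have different labels. Since the `d`'s sum to at most `Δ |X|`, the average
degree of the square inside `X` is at most `Δ + (k - 1) Δ² / k`; some vertex of `X` is at most
average, and its degree, being an integer, is at most the floor.
-/

/-- An `(m,n)`-colored mixed graph: a simple underlying graph together with a
labeling `lab` of ordered adjacent pairs.  Arcs get labels with absolute value in
`{1,...,m}` (reversal negates the label) and edges get labels in
`{m+1,...,m+n}` (reversal preserves the label).  Non-adjacent pairs get `0`. -/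
structure CMG (V : Type) (m n : ℕ) where
  G : SimpleGraph V
  lab : V → V → ℤ
  lab_eq_zero : ∀ ⦃u v : V⦄, ¬ G.Adj u v → lab u v = 0
  lab_mem : ∀ ⦃u v : V⦄, G.Adj u v →
    (1 ≤ lab u v ∧ lab u v ≤ (m : ℤ) + n) ∨ (-(m : ℤ) ≤ lab u v ∧ lab u v ≤ -1)
  lab_rev_arc : ∀ ⦃u v : V⦄, G.Adj u v → lab u v ≤ (m : ℤ) → lab v u = - lab u v
  lab_rev_edge : ∀ ⦃u v : V⦄, G.Adj u v → (m : ℤ) < lab u v → lab v u = lab u v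

/-- `u` sees `v`: they are adjacent or joined by a special 2-path
(a 2-path `u-w-v` with `lab u w ≠ lab v w`). -/
def CMG.sees {V : Type} {m n : ℕ} (H : CMG V m n) (u v : V) : Prop :=
  H.G.Adj u v ∨ ∃ w : V, H.G.Adj u w ∧ H.G.Adj v w ∧ H.lab u w ≠ H.lab v w

/-- The square of an `(m,n)`-colored mixed graph: vertices adjacent iff they see
each other (adjacent in `G` or joined by a special 2-path). -/
def CMG.square {V : Type} {m n : ℕ} (H : CMG V m n) : SimpleGraph V where
  Adj u v := u ≠ v ∧ H.sees u v
  symm := ⟨by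
    rintro u v ⟨huv, h | ⟨w, h1, h2, h3⟩⟩
    · exact ⟨huv.symm, Or.inl h.symm⟩
    · exact ⟨huv.symm, Or.inr ⟨w, h2, h1, h3.symm⟩⟩⟩
  loopless := ⟨fun v h => h.1 rfl⟩

open Finset

namespace Finset

variable {α β : Type*} [DecidableEq β]

lemma mul_sum_card_filter_ne_le (s : Finset α) (g : α → β) {k : ℕ} (hk : #(s.image g) ≤ k) :
    k * ∑ v ∈ s, #{u ∈ s | g u ≠ g v} ≤ (k - 1) * #s ^ 2 := by
  set fiber : β → ℕ := fun b => #{u ∈ s | g u = b}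
  have hsplit : ∑ v ∈ s, #{u ∈ s | g u ≠ g v} + ∑ b ∈ s.image g, fiber b ^ 2 = #s ^ 2 := by
    have hfibers : ∑ v ∈ s, fiber (g v) = ∑ b ∈ s.image g, fiber b ^ 2 := by
      rw [sum_comp]
      exact sum_congr rfl fun b _ => by simp [fiber, sq]
    rw [← hfibers, ← sum_add_distrib, sq, ← smul_eq_mul, ← sum_const]
    exact sum_congr rfl fun v _ => by
      simpa [fiber, add_comm] using card_filter_add_card_filter_not (s := s) (g · = g v)
  have hcs : #s ^ 2 ≤ k * ∑ b ∈ s.image g, fiber b ^ 2 := by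
    calc #s ^ 2 = (∑ b ∈ s.image g, fiber b) ^ 2 := by rw [card_eq_sum_card_image g s]
      _ ≤ #(s.image g) * ∑ b ∈ s.image g, fiber b ^ 2 := sq_sum_le_card_mul_sum_sq
      _ ≤ k * ∑ b ∈ s.image g, fiber b ^ 2 := Nat.mul_le_mul_right _ hk
  rw [Nat.sub_one_mul]
  apply Nat.le_sub_of_add_le
  calc k * ∑ v ∈ s, #{u ∈ s | g u ≠ g v} + #s ^ 2
      ≤ k * ∑ v ∈ s, #{u ∈ s | g u ≠ g v} + k * ∑ b ∈ s.image g, fiber b ^ 2 := by gcongr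
    _ = k * #s ^ 2 := by rw [← mul_add, hsplit]

end Finset

namespace SimpleGraph

variable {V β : Type*} (G : SimpleGraph V) (lab : V → V → β)

/-- `CMG.sees` for an arbitrary labelling: `H.sees = H.G.Sees H.lab` holds by `rfl`. -/
def Sees (v u : V) : Prop :=
  G.Adj v u ∨ ∃ w, G.Adj v w ∧ G.Adj u w ∧ lab v w ≠ lab u w

variable [Fintype V] [DecidableRel G.Adj] {Δ k : ℕ}

lemma sum_card_filter_adj_le (hΔ : ∀ v, G.degree v ≤ Δ) (X : Finset V) :
    ∑ w, #{v ∈ X | G.Adj v w} ≤ #X * Δ := by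
  have hswap := sum_card_bipartiteAbove_eq_sum_card_bipartiteBelow (s := X) (t := univ) G.Adj
  simp only [bipartiteAbove, bipartiteBelow, ← neighborFinset_eq_filter] at hswap
  rw [← hswap, ← smul_eq_mul, ← sum_const]
  exact sum_le_sum fun v _ => hΔ v

variable [DecidableEq V] [DecidableEq β] [DecidableRel (G.Sees lab)]

lemma card_filter_sees_le (hΔ : ∀ v, G.degree v ≤ Δ) (X : Finset V) (v : V) :
    #{u ∈ X | G.Sees lab v u} ≤
      Δ + ∑ w ∈ G.neighborFinset v, #{u ∈ {u ∈ X | G.Adj u w} | lab u w ≠ lab v w} := by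
  have hsub : {u ∈ X | G.Sees lab v u} ⊆ G.neighborFinset v ∪
      (G.neighborFinset v).biUnion fun w => {u ∈ {u ∈ X | G.Adj u w} | lab u w ≠ lab v w} := by
    intro u hu
    obtain ⟨huX, hvu | ⟨w, hvw, huw, hlab⟩⟩ := mem_filter.1 hu
    · exact mem_union_left _ (by simpa using hvu)
    · exact mem_union_right _ (mem_biUnion.2 ⟨w, by simpa using hvw, by simp [*, hlab.symm]⟩)
  calc #{u ∈ X | G.Sees lab v u} ≤ _ := card_le_card hsub
    _ ≤ _ := card_union_le _ _
    _ ≤ _ := add_le_add (hΔ v) card_biUnion_le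

lemma mul_sum_card_filter_sees_le (hΔ : ∀ v, G.degree v ≤ Δ)
    (hk : ∀ w, #((G.neighborFinset w).image (lab · w)) ≤ k) (X : Finset V) :
    k * ∑ v ∈ X, #{u ∈ X | G.Sees lab v u} ≤ #X * (k * Δ + (k - 1) * Δ ^ 2) := by
  set N : V → Finset V := fun w => {u ∈ X | G.Adj u w}
  have hN : ∀ w, #(N w) ≤ Δ := fun w =>
    (card_le_card fun u hu => by simpa [N, adj_comm] using (mem_filter.1 hu).2).trans (hΔ w)
  have hmiddle : ∀ w, k * ∑ v ∈ N w, #{u ∈ N w | lab u w ≠ lab v w} ≤ (k - 1) * Δ * #(N w) := by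
    intro w
    have hcolours : #((N w).image (lab · w)) ≤ k :=
      (card_le_card (image_subset_image fun u hu => by
        simpa [N, adj_comm] using (mem_filter.1 hu).2)).trans (hk w)
    calc _ ≤ (k - 1) * #(N w) ^ 2 := mul_sum_card_filter_ne_le _ _ hcolours
      _ ≤ (k - 1) * Δ * #(N w) := by rw [sq, ← mul_assoc]; gcongr; exact hN w
  have hswap : ∑ v ∈ X, ∑ w ∈ G.neighborFinset v, #{u ∈ N w | lab u w ≠ lab v w} =
      ∑ w, ∑ v ∈ N w, #{u ∈ N w | lab u w ≠ lab v w} :=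
    sum_comm' fun v w => by simp [N]
  calc k * ∑ v ∈ X, #{u ∈ X | G.Sees lab v u}
      ≤ k * ∑ v ∈ X, (Δ + ∑ w ∈ G.neighborFinset v, #{u ∈ N w | lab u w ≠ lab v w}) :=
        Nat.mul_le_mul_left k (sum_le_sum fun v _ => G.card_filter_sees_le lab hΔ X v)
    _ = k * (#X * Δ) + ∑ w, k * ∑ v ∈ N w, #{u ∈ N w | lab u w ≠ lab v w} := by
        rw [sum_add_distrib, hswap, sum_const, smul_eq_mul, mul_add, mul_sum]
    _ ≤ k * (#X * Δ) + (k - 1) * Δ * ∑ w, #(N w) := by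
        rw [mul_sum]; exact Nat.add_le_add_left (sum_le_sum fun w _ => hmiddle w) _
    _ ≤ k * (#X * Δ) + (k - 1) * Δ * (#X * Δ) := by gcongr; exact G.sum_card_filter_adj_le hΔ X
    _ = #X * (k * Δ + (k - 1) * Δ ^ 2) := by ring

lemma exists_card_filter_sees_le (hΔ : ∀ v, G.degree v ≤ Δ)
    (hk : ∀ w, #((G.neighborFinset w).image (lab · w)) ≤ k) {X : Finset V} (hX : X.Nonempty) :
    ∃ v ∈ X, #{u ∈ X | G.Sees lab v u} ≤ (k - 1) * Δ ^ 2 / k + Δ := by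
  rcases Nat.eq_zero_or_pos k with rfl | hk₀
  -- without colours `G` has no edges; `k = 1` gives the same bound, `(0 - 1) * Δ ^ 2 / 0 = 0`
  · have h := G.mul_sum_card_filter_sees_le lab hΔ (k := 1) (fun w => (hk w).trans zero_le_one) X
    rw [one_mul, ← smul_eq_mul, ← sum_const] at h
    simpa using exists_le_of_sum_le hX h
  · have h := G.mul_sum_card_filter_sees_le lab hΔ hk X
    rw [mul_sum, ← smul_eq_mul, ← sum_const] at h
    obtain ⟨v, hv, hle⟩ := exists_le_of_sum_le hX h
    refine ⟨v, hv, ?_⟩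
    rw [← Nat.add_mul_div_left _ _ hk₀, Nat.le_div_iff_mul_le hk₀]
    linarith

end SimpleGraph

lemma CMG.card_image_lab_le {V : Type} [Fintype V] {m n : ℕ} (H : CMG V m n)
    [DecidableRel H.G.Adj] (w : V) :
    #((H.G.neighborFinset w).image (H.lab · w)) ≤ 2 * m + n := by
  have hsub : (H.G.neighborFinset w).image (H.lab · w) ⊆ Icc (-(m : ℤ)) (-1) ∪ Icc 1 (m + n) := by
    intro a ha
    obtain ⟨u, hu, rfl⟩ := mem_image.1 ha
    rcases H.lab_mem ((H.G.mem_neighborFinset w u).1 hu).symm with h | h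
    · exact mem_union_right _ (mem_Icc.2 h)
    · exact mem_union_left _ (mem_Icc.2 h)
  calc _ ≤ #(Icc (-(m : ℤ)) (-1) ∪ Icc 1 (m + n)) := card_le_card hsub
    _ ≤ #(Icc (-(m : ℤ)) (-1)) + #(Icc (1 : ℤ) (m + n)) := card_union_le _ _
    _ = 2 * m + n := by simp only [Int.card_Icc]; omega

theorem square_degenerate_general {V : Type} [Fintype V] (m n Δ : ℕ)
    (H : CMG V m n) (hΔ : ∀ v : V, (H.G.neighborSet v).ncard ≤ Δ) :
    ∀ X : Set V, X.Nonempty → ∃ v ∈ X,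
      ({u ∈ X | H.square.Adj v u}).ncard ≤ ((2 * m + n - 1) * Δ ^ 2) / (2 * m + n) + Δ := by
  classical
  intro X hX
  have hdeg : ∀ v, H.G.degree v ≤ Δ := fun v => by
    simpa [← SimpleGraph.card_neighborFinset_eq_degree, SimpleGraph.neighborFinset_eq_filter,
      Set.ncard_eq_toFinset_card'] using hΔ v
  obtain ⟨v, hv, hle⟩ := H.G.exists_card_filter_sees_le H.lab hdeg H.card_image_lab_le
    (X := X.toFinset) (by simpa using hX)
  refine ⟨v, by simpa using hv, le_trans ?_ hle⟩
  rw [← Set.ncard_coe_finset]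
  exact Set.ncard_le_ncard fun u hu => by
    simp only [coe_filter, Set.mem_toFinset]
    exact ⟨hu.1, hu.2.2⟩

theorem square_degenerate {V : Type} [Fintype V] (m n Δ : ℕ) (hmn : (m, n) ≠ (0, 1))
    (H : CMG V m n) (hΔ : ∀ v : V, (H.G.neighborSet v).ncard ≤ Δ) :
    ∀ X : Set V, X.Nonempty → ∃ v ∈ X,
      ({u ∈ X | H.square.Adj v u}).ncard ≤ ((2 * m + n - 1) * Δ ^ 2) / (2 * m + n) + Δ :=
  square_degenerate_general m n Δ H hΔ
end

section
/- There is no proper 3-edge-coloring of the Petersen graph; equivalently, the chromatic index of the Petersen graph is 4. -/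
/-- The Petersen graph as the Kneser graph `K(5,2)`. -/
def petersen : SimpleGraph {s : Finset (Fin 5) // s.card = 2} :=
  SimpleGraph.fromRel (fun s t => Disjoint s.val t.val)

abbrev PV := {s : Finset (Fin 5) // s.card = 2}

instance petersenAdjDecidable : DecidableRel petersen.Adj := fun a b =>
  decidable_of_iff (a ≠ b ∧ (Disjoint a.val b.val ∨ Disjoint b.val a.val))
    (by rw [petersen, SimpleGraph.fromRel_adj])

lemma cardA : ∀ i : Fin 5, ({2*i, 2*i+1} : Finset (Fin 5)).card = 2 := by decide

lemma cardB : ∀ i : Fin 5, ({2*i+2, 2*i+4} : Finset (Fin 5)).card = 2 := by decide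

/-- outer pentagon vertices -/
def pA (i : Fin 5) : PV := ⟨{2*i, 2*i+1}, cardA i⟩

/-- inner pentagram vertices -/
def pB (i : Fin 5) : PV := ⟨{2*i+2, 2*i+4}, cardB i⟩

lemma adjAA : ∀ i : Fin 5, petersen.Adj (pA i) (pA (i+1)) := by decide
lemma adjAB : ∀ i : Fin 5, petersen.Adj (pA i) (pB i) := by decide
lemma adjBB : ∀ i : Fin 5, petersen.Adj (pB i) (pB (i+2)) := by decide

lemma neAA : ∀ i : Fin 5, s(pA i, pA (i+1)) ≠ s(pA (i+1), pA (i+1+1)) := by decide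
lemma neAA' : ∀ i : Fin 5, s(pA i, pA (i+1)) ≠ s(pA (i+4), pA (i+4+1)) := by decide
lemma neAB : ∀ i : Fin 5, s(pA i, pB i) ≠ s(pA i, pA (i+1)) := by decide
lemma neAB' : ∀ i : Fin 5, s(pA i, pB i) ≠ s(pA (i+4), pA (i+4+1)) := by decide
lemma neBB : ∀ i : Fin 5, s(pB i, pB (i+2)) ≠ s(pB (i+2), pB (i+2+2)) := by decide
lemma neABB : ∀ i : Fin 5, s(pA i, pB i) ≠ s(pB i, pB (i+2)) := by decide
lemma neABB' : ∀ i : Fin 5, s(pA i, pB i) ≠ s(pB (i+3), pB (i+3+2)) := by decide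
lemma idx5 : ∀ i : Fin 5, i + 3 + 2 = i := by decide

lemma third : ∀ a b x : Fin 3, a ≠ b → x ≠ a → x ≠ b → x = -(a+b) := by decide

set_option maxRecDepth 10000 in
lemma key : ∀ f g : Fin 5 → Fin 3, (∀ i, f i ≠ f (i+1)) → (∀ i, g i ≠ g (i+2)) →
    ¬ (∀ i, -(f i + f (i+4)) ≠ g i ∧ -(f i + f (i+4)) ≠ g (i+3)) := by decide

def col (s t : Finset (Fin 5)) : Fin 4 :=
  if (s = ({0,1} : Finset (Fin 5)) ∧ t = ({2,3} : Finset (Fin 5))) ∨ (t = ({0,1} : Finset (Fin 5)) ∧ s = ({2,3} : Finset (Fin 5))) then 0 else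
  if (s = ({2,3} : Finset (Fin 5)) ∧ t = ({0,4} : Finset (Fin 5))) ∨ (t = ({2,3} : Finset (Fin 5)) ∧ s = ({0,4} : Finset (Fin 5))) then 1 else
  if (s = ({0,4} : Finset (Fin 5)) ∧ t = ({1,2} : Finset (Fin 5))) ∨ (t = ({0,4} : Finset (Fin 5)) ∧ s = ({1,2} : Finset (Fin 5))) then 0 else
  if (s = ({1,2} : Finset (Fin 5)) ∧ t = ({3,4} : Finset (Fin 5))) ∨ (t = ({1,2} : Finset (Fin 5)) ∧ s = ({3,4} : Finset (Fin 5))) then 1 else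
  if (s = ({3,4} : Finset (Fin 5)) ∧ t = ({0,1} : Finset (Fin 5))) ∨ (t = ({3,4} : Finset (Fin 5)) ∧ s = ({0,1} : Finset (Fin 5))) then 2 else
  if (s = ({0,1} : Finset (Fin 5)) ∧ t = ({2,4} : Finset (Fin 5))) ∨ (t = ({0,1} : Finset (Fin 5)) ∧ s = ({2,4} : Finset (Fin 5))) then 1 else
  if (s = ({2,3} : Finset (Fin 5)) ∧ t = ({1,4} : Finset (Fin 5))) ∨ (t = ({2,3} : Finset (Fin 5)) ∧ s = ({1,4} : Finset (Fin 5))) then 2 else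
  if (s = ({0,4} : Finset (Fin 5)) ∧ t = ({1,3} : Finset (Fin 5))) ∨ (t = ({0,4} : Finset (Fin 5)) ∧ s = ({1,3} : Finset (Fin 5))) then 2 else
  if (s = ({1,2} : Finset (Fin 5)) ∧ t = ({0,3} : Finset (Fin 5))) ∨ (t = ({1,2} : Finset (Fin 5)) ∧ s = ({0,3} : Finset (Fin 5))) then 2 else
  if (s = ({3,4} : Finset (Fin 5)) ∧ t = ({0,2} : Finset (Fin 5))) ∨ (t = ({3,4} : Finset (Fin 5)) ∧ s = ({0,2} : Finset (Fin 5))) then 0 else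
  if (s = ({2,4} : Finset (Fin 5)) ∧ t = ({1,3} : Finset (Fin 5))) ∨ (t = ({2,4} : Finset (Fin 5)) ∧ s = ({1,3} : Finset (Fin 5))) then 0 else
  if (s = ({1,4} : Finset (Fin 5)) ∧ t = ({0,3} : Finset (Fin 5))) ∨ (t = ({1,4} : Finset (Fin 5)) ∧ s = ({0,3} : Finset (Fin 5))) then 0 else
  if (s = ({1,3} : Finset (Fin 5)) ∧ t = ({0,2} : Finset (Fin 5))) ∨ (t = ({1,3} : Finset (Fin 5)) ∧ s = ({0,2} : Finset (Fin 5))) then 1 else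
  if (s = ({0,3} : Finset (Fin 5)) ∧ t = ({2,4} : Finset (Fin 5))) ∨ (t = ({0,3} : Finset (Fin 5)) ∧ s = ({2,4} : Finset (Fin 5))) then 3 else
  if (s = ({0,2} : Finset (Fin 5)) ∧ t = ({1,4} : Finset (Fin 5))) ∨ (t = ({0,2} : Finset (Fin 5)) ∧ s = ({1,4} : Finset (Fin 5))) then 3 else
  0

lemma colSymm : ∀ u v : PV, col u.val v.val = col v.val u.val := by decide

def col4 : Sym2 PV → Fin 4 := Sym2.lift ⟨fun u v => col u.val v.val, colSymm⟩

set_option maxRecDepth 40000 in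
lemma col4proper : ∀ a b a' b' : PV, petersen.Adj a b → petersen.Adj a' b' →
    s(a, b) ≠ s(a', b') → (∃ v, v ∈ s(a, b) ∧ v ∈ s(a', b')) →
    col4 s(a, b) ≠ col4 s(a', b') := by decide

theorem petersen_chromatic_index_four :
    (¬ ∃ c : Sym2 {s : Finset (Fin 5) // s.card = 2} → Fin 3,
      ∀ e₁ ∈ petersen.edgeSet, ∀ e₂ ∈ petersen.edgeSet, e₁ ≠ e₂ →
        (∃ v, v ∈ e₁ ∧ v ∈ e₂) → c e₁ ≠ c e₂) ∧
    (∃ c : Sym2 {s : Finset (Fin 5) // s.card = 2} → Fin 4,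
      ∀ e₁ ∈ petersen.edgeSet, ∀ e₂ ∈ petersen.edgeSet, e₁ ≠ e₂ →
        (∃ v, v ∈ e₁ ∧ v ∈ e₂) → c e₁ ≠ c e₂) := by
  constructor
  · rintro ⟨c, H⟩
    set f : Fin 5 → Fin 3 := fun i => c s(pA i, pA (i+1)) with hf
    set g : Fin 5 → Fin 3 := fun i => c s(pB i, pB (i+2)) with hg
    set h : Fin 5 → Fin 3 := fun i => c s(pA i, pB i) with hh
    have memAA : ∀ i : Fin 5, s(pA i, pA (i+1)) ∈ petersen.edgeSet := fun i =>
      (SimpleGraph.mem_edgeSet petersen).2 (adjAA i)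
    have memAB : ∀ i : Fin 5, s(pA i, pB i) ∈ petersen.edgeSet := fun i =>
      (SimpleGraph.mem_edgeSet petersen).2 (adjAB i)
    have memBB : ∀ i : Fin 5, s(pB i, pB (i+2)) ∈ petersen.edgeSet := fun i =>
      (SimpleGraph.mem_edgeSet petersen).2 (adjBB i)
    have hc1 : ∀ i, f i ≠ f (i+1) := fun i =>
      H _ (memAA i) _ (memAA (i+1)) (neAA i)
        ⟨pA (i+1), Sym2.mem_mk_right _ _, Sym2.mem_mk_left _ _⟩
    have hc2 : ∀ i, f i ≠ f (i+4) := fun i =>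
      H _ (memAA i) _ (memAA (i+4)) (neAA' i)
        ⟨pA i, Sym2.mem_mk_left _ _, by
          have : i + 4 + 1 = i := by omega
          rw [this]; exact Sym2.mem_mk_right _ _⟩
    have hc3 : ∀ i, h i ≠ f i := fun i =>
      H _ (memAB i) _ (memAA i) (neAB i)
        ⟨pA i, Sym2.mem_mk_left _ _, Sym2.mem_mk_left _ _⟩
    have hc4 : ∀ i, h i ≠ f (i+4) := fun i =>
      H _ (memAB i) _ (memAA (i+4)) (neAB' i)
        ⟨pA i, Sym2.mem_mk_left _ _, by
          have : i + 4 + 1 = i := by omega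
          rw [this]; exact Sym2.mem_mk_right _ _⟩
    have hc5 : ∀ i, g i ≠ g (i+2) := fun i =>
      H _ (memBB i) _ (memBB (i+2)) (neBB i)
        ⟨pB (i+2), Sym2.mem_mk_right _ _, Sym2.mem_mk_left _ _⟩
    have hc6 : ∀ i, h i ≠ g i := fun i =>
      H _ (memAB i) _ (memBB i) (neABB i)
        ⟨pB i, Sym2.mem_mk_right _ _, Sym2.mem_mk_left _ _⟩
    have hc7 : ∀ i, h i ≠ g (i+3) := fun i =>
      H _ (memAB i) _ (memBB (i+3)) (neABB' i)
        ⟨pB i, Sym2.mem_mk_right _ _, by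
          rw [idx5 i]; exact Sym2.mem_mk_right _ _⟩
    have hval : ∀ i, h i = -(f i + f (i+4)) := fun i =>
      third (f i) (f (i+4)) (h i) (hc2 i) (hc3 i) (hc4 i)
    exact key f g hc1 hc5 (fun i => ⟨hval i ▸ hc6 i, hval i ▸ hc7 i⟩)
  · refine ⟨col4, fun e₁ h₁ e₂ h₂ hne hshare => ?_⟩
    induction e₁ using Sym2.ind with
    | _ a b =>
      induction e₂ using Sym2.ind with
      | _ a' b' =>
        exact col4proper a b a' b' ((SimpleGraph.mem_edgeSet petersen).1 h₁)
          ((SimpleGraph.mem_edgeSet petersen).1 h₂) hne hshare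
end

section
/- The Petersen graph is the unique 3-regular graph on 10 vertices with diameter at most 2, and in it any two non-adjacent vertices are joined by exactly one path of length 2. -/
instance petersen.instDecidableAdj : DecidableRel petersen.Adj := fun a b =>
  decidable_of_iff' _ (SimpleGraph.fromRel_adj _ a b)

/-- labels for the 10 vertices of Petersen -/
def pLab : Fin 10 → {s : Finset (Fin 5) // s.card = 2}
  | 0 => ⟨{0,1}, by decide⟩
  | 1 => ⟨{2,3}, by decide⟩
  | 2 => ⟨{2,4}, by decide⟩
  | 3 => ⟨{3,4}, by decide⟩
  | 4 => ⟨{0,4}, by decide⟩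
  | 5 => ⟨{1,4}, by decide⟩
  | 6 => ⟨{1,3}, by decide⟩
  | 7 => ⟨{0,3}, by decide⟩
  | 8 => ⟨{1,2}, by decide⟩
  | 9 => ⟨{0,2}, by decide⟩

/-- adjacency table -/
def tbl : Fin 10 → Finset (Fin 10)
  | 0 => {1,2,3}
  | 1 => {0,4,5}
  | 2 => {0,6,7}
  | 3 => {0,8,9}
  | 4 => {1,6,8}
  | 5 => {1,7,9}
  | 6 => {2,4,9}
  | 7 => {2,5,8}
  | 8 => {3,4,7}
  | 9 => {3,5,6}

lemma tbl_adj : ∀ i j : Fin 10, (j ∈ tbl i) ↔ petersen.Adj (pLab i) (pLab j) := by decide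

lemma pLab_inj : Function.Injective pLab := by decide

lemma petersen_card : Fintype.card {s : Finset (Fin 5) // s.card = 2} = 10 := by decide

def gfun {V : Type} (x0 x1 x2 x3 x4 x5 x6 x7 x8 x9 : V) : Fin 10 → V
  | 0 => x0 | 1 => x1 | 2 => x2 | 3 => x3 | 4 => x4
  | 5 => x5 | 6 => x6 | 7 => x7 | 8 => x8 | 9 => x9

section Moore

variable {V : Type} [Fintype V] [DecidableEq V] {G : SimpleGraph V} [DecidableRel G.Adj]

lemma nbhd_eq {x x1 x2 x3 : V} (hd : (G.neighborFinset x).card = 3)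
    (h1 : G.Adj x x1) (h2 : G.Adj x x2) (h3 : G.Adj x x3)
    (d12 : x1 ≠ x2) (d13 : x1 ≠ x3) (d23 : x2 ≠ x3) :
    G.neighborFinset x = {x1, x2, x3} := by
  have hsub : ({x1, x2, x3} : Finset V) ⊆ G.neighborFinset x := by
    intro y hy
    simp only [Finset.mem_insert, Finset.mem_singleton] at hy
    rcases hy with rfl | rfl | rfl
    · exact (SimpleGraph.mem_neighborFinset _ _ _).mpr h1
    · exact (SimpleGraph.mem_neighborFinset _ _ _).mpr h2
    · exact (SimpleGraph.mem_neighborFinset _ _ _).mpr h3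
  have hcard3 : ({x1, x2, x3} : Finset V).card = 3 := by
    rw [Finset.card_insert_of_notMem (by simp [d12, d13]),
      Finset.card_insert_of_notMem (by simp [d23]), Finset.card_singleton]
  exact (Finset.eq_of_subset_of_card_le hsub (by rw [hd, hcard3])).symm

lemma moore_key (hcard : Fintype.card V = 10) (hdeg : ∀ v, G.degree v = 3)
    (hdiam : ∀ u v : V, u ≠ v → G.Adj u v ∨ ∃ w, G.Adj u w ∧ G.Adj w v) :
    (∀ v u w, G.Adj v u → G.Adj v w → G.Adj u w → False) ∧
    (∀ u v w w', u ≠ v → ¬ G.Adj u v → G.Adj u w → G.Adj w v →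
      G.Adj u w' → G.Adj w' v → w = w') := by
  have main : ∀ v : V,
      (∀ x ∈ (G.neighborFinset v).sigma (fun u => (G.neighborFinset u).erase v),
        (x.2 : V) ∉ insert v (G.neighborFinset v)) ∧
      Set.InjOn (Sigma.snd) (((G.neighborFinset v).sigma
        (fun u => (G.neighborFinset u).erase v) : Finset ((_ : V) × V)) : Set ((_ : V) × V)) := by
    intro v
    have hdeg' : ∀ x : V, (G.neighborFinset x).card = 3 := hdeg
    set S := (G.neighborFinset v).sigma (fun u => (G.neighborFinset u).erase v) with hS
    set A := insert v (G.neighborFinset v) with hA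
    have cardS : S.card = 6 := by
      rw [hS, Finset.card_sigma]
      have : ∀ u ∈ G.neighborFinset v, ((G.neighborFinset u).erase v).card = 2 := by
        intro u hu
        rw [Finset.card_erase_of_mem, hdeg' u]
        rw [SimpleGraph.mem_neighborFinset] at hu ⊢
        exact hu.symm
      rw [Finset.sum_congr rfl this, Finset.sum_const, hdeg' v]
      rfl
    have cardA : A.card = 4 := by
      rw [hA, Finset.card_insert_of_notMem (SimpleGraph.notMem_neighborFinset_self G v),
        hdeg' v]
    have hAsub : A ⊆ Finset.univ := Finset.subset_univ A
    have cover : Finset.univ \ A ⊆ S.image Sigma.snd := by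
      intro w hw
      rw [Finset.mem_sdiff] at hw
      have hwv : w ≠ v := by
        intro h; exact hw.2 (by rw [h, hA]; exact Finset.mem_insert_self _ _)
      have hwnadj : ¬ G.Adj v w := by
        intro h
        exact hw.2 (by
          rw [hA]
          exact Finset.mem_insert_of_mem ((SimpleGraph.mem_neighborFinset _ _ _).mpr h))
      rcases hdiam v w (Ne.symm hwv) with h | ⟨u, h1, h2⟩
      · exact absurd h hwnadj
      · refine Finset.mem_image.mpr ⟨⟨u, w⟩, ?_, rfl⟩
        rw [hS, Finset.mem_sigma]
        exact ⟨(SimpleGraph.mem_neighborFinset _ _ _).mpr h1,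
          Finset.mem_erase.mpr ⟨hwv, (SimpleGraph.mem_neighborFinset _ _ _).mpr h2⟩⟩
    have cardImLe : (S.image Sigma.snd).card ≤ 6 := cardS ▸ Finset.card_image_le
    have cardsd : (Finset.univ \ A).card = 6 := by
      rw [Finset.card_sdiff_of_subset hAsub, cardA, Finset.card_univ, hcard]
    have him : Finset.univ \ A = S.image Sigma.snd :=
      Finset.eq_of_subset_of_card_le cover (by omega)
    have cardIm : (S.image Sigma.snd).card = S.card := by
      rw [← him, cardsd, cardS]
    constructor
    · intro x hx hmem
      have : (x.2 : V) ∈ S.image Sigma.snd := Finset.mem_image_of_mem _ hx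
      rw [← him, Finset.mem_sdiff] at this
      exact this.2 hmem
    · exact Finset.injOn_of_card_image_eq cardIm
  constructor
  · intro v u w hvu hvw huw
    obtain ⟨havoid, _⟩ := main v
    have hx : (⟨u, w⟩ : (_ : V) × V) ∈ (G.neighborFinset v).sigma
        (fun u => (G.neighborFinset u).erase v) := by
      rw [Finset.mem_sigma]
      refine ⟨(SimpleGraph.mem_neighborFinset _ _ _).mpr hvu,
        Finset.mem_erase.mpr ⟨fun h => G.irrefl (h ▸ hvw), (SimpleGraph.mem_neighborFinset _ _ _).mpr huw⟩⟩
    exact havoid ⟨u, w⟩ hx (Finset.mem_insert_of_mem ((SimpleGraph.mem_neighborFinset _ _ _).mpr hvw))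
  · intro u v w w' huv hnadj h1 h2 h3 h4
    obtain ⟨_, hinj⟩ := main u
    have hx : (⟨w, v⟩ : (_ : V) × V) ∈ (G.neighborFinset u).sigma
        (fun x => (G.neighborFinset x).erase u) := by
      rw [Finset.mem_sigma]
      exact ⟨(SimpleGraph.mem_neighborFinset _ _ _).mpr h1,
        Finset.mem_erase.mpr ⟨Ne.symm huv, (SimpleGraph.mem_neighborFinset _ _ _).mpr h2⟩⟩
    have hy : (⟨w', v⟩ : (_ : V) × V) ∈ (G.neighborFinset u).sigma
        (fun x => (G.neighborFinset x).erase u) := by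
      rw [Finset.mem_sigma]
      exact ⟨(SimpleGraph.mem_neighborFinset _ _ _).mpr h3,
        Finset.mem_erase.mpr ⟨Ne.symm huv, (SimpleGraph.mem_neighborFinset _ _ _).mpr h4⟩⟩
    have := hinj hx hy rfl
    exact congrArg Sigma.fst this


end Moore

section Moore2

variable {V : Type} [Fintype V] [DecidableEq V] {G : SimpleGraph V} [DecidableRel G.Adj]

lemma moore_iso (hcard : Fintype.card V = 10) (hdeg : ∀ v, G.degree v = 3)
    (hdiam : ∀ u v : V, u ≠ v → G.Adj u v ∨ ∃ w, G.Adj u w ∧ G.Adj w v) :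
    Nonempty (G ≃g petersen) := by
  obtain ⟨L1, L2⟩ := moore_key hcard hdeg hdiam
  have hdeg' : ∀ x : V, (G.neighborFinset x).card = 3 := hdeg
  have hnonempty : Nonempty V := Fintype.card_pos_iff.mp (by omega)
  obtain ⟨v0⟩ := hnonempty
  obtain ⟨a, b, c, hab, hac, hbc, hNv0⟩ := Finset.card_eq_three.mp (hdeg' v0)
  have ha : G.Adj v0 a := by rw [← SimpleGraph.mem_neighborFinset, hNv0]; simp
  have hb : G.Adj v0 b := by rw [← SimpleGraph.mem_neighborFinset, hNv0]; simp
  have hc : G.Adj v0 c := by rw [← SimpleGraph.mem_neighborFinset, hNv0]; simp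
  have cardE : ∀ u, G.Adj v0 u → ((G.neighborFinset u).erase v0).card = 2 := by
    intro u hu
    rw [Finset.card_erase_of_mem ((SimpleGraph.mem_neighborFinset _ _ _).mpr hu.symm), hdeg' u]
  have nadj : ∀ x y, G.Adj v0 x → G.Adj v0 y → ¬ G.Adj x y :=
    fun x y hx hy h => L1 v0 x y hx hy h
  have D : ∀ u w x, G.Adj v0 u → G.Adj v0 w → u ≠ w → x ≠ v0 →
      G.Adj u x → G.Adj w x → False := by
    intro u w x hu hw huw hxv0 h1 h2
    exact hxv0 (L2 u w v0 x huw (nadj u w hu hw) hu.symm hw h1 h2.symm).symm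
  -- the two other neighbors of a
  obtain ⟨a1, a2, ha12, hNa'⟩ := Finset.card_eq_two.mp (cardE a ha)
  have ha1m : a1 ∈ (G.neighborFinset a).erase v0 := by rw [hNa']; simp
  have ha2m : a2 ∈ (G.neighborFinset a).erase v0 := by rw [hNa']; simp
  have ha1v0 : a1 ≠ v0 := (Finset.mem_erase.mp ha1m).1
  have ha2v0 : a2 ≠ v0 := (Finset.mem_erase.mp ha2m).1
  have haa1 : G.Adj a a1 := (SimpleGraph.mem_neighborFinset _ _ _).mp (Finset.mem_erase.mp ha1m).2
  have haa2 : G.Adj a a2 := (SimpleGraph.mem_neighborFinset _ _ _).mp (Finset.mem_erase.mp ha2m).2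
  have hnv0a1 : ¬ G.Adj v0 a1 := fun h => L1 v0 a a1 ha h haa1
  have hnv0a2 : ¬ G.Adj v0 a2 := fun h => L1 v0 a a2 ha h haa2
  have getw : ∀ u x, G.Adj v0 u → ¬ G.Adj v0 x → ¬ G.Adj u x → x ≠ u →
      ∃ w, G.Adj x w ∧ G.Adj w u ∧ w ≠ v0 := by
    intro u x hu hnvx hnux hxu
    rcases hdiam x u hxu with h | ⟨w, h1, h2⟩
    · exact absurd h.symm hnux
    · exact ⟨w, h1, h2, fun hw => hnvx ((hw ▸ h1).symm)⟩
  -- define b1 as the common neighbor of a1 and b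
  have hna1b : ¬ G.Adj b a1 := fun h => D a b a1 ha hb hab ha1v0 haa1 h
  have ha1b : a1 ≠ b := fun h => nadj a b ha hb (h ▸ haa1)
  obtain ⟨b1, hab1, hb1b, hb1v0⟩ := getw b a1 hb hnv0a1 hna1b ha1b
  have hbb1 : G.Adj b b1 := hb1b.symm
  have hb1m : b1 ∈ (G.neighborFinset b).erase v0 :=
    Finset.mem_erase.mpr ⟨hb1v0, (SimpleGraph.mem_neighborFinset _ _ _).mpr hbb1⟩
  have hcard1b : (((G.neighborFinset b).erase v0).erase b1).card = 1 := by
    rw [Finset.card_erase_of_mem hb1m, cardE b hb]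
  obtain ⟨b2, hb2s⟩ := Finset.card_eq_one.mp hcard1b
  have hb2m : b2 ∈ ((G.neighborFinset b).erase v0).erase b1 := by rw [hb2s]; simp
  have hb2b1 : b2 ≠ b1 := (Finset.mem_erase.mp hb2m).1
  have hb2v0 : b2 ≠ v0 := (Finset.mem_erase.mp (Finset.mem_erase.mp hb2m).2).1
  have hbb2 : G.Adj b b2 :=
    (SimpleGraph.mem_neighborFinset _ _ _).mp (Finset.mem_erase.mp (Finset.mem_erase.mp hb2m).2).2
  have hNb' : (G.neighborFinset b).erase v0 = {b1, b2} := by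
    rw [← Finset.insert_erase hb1m, hb2s]
  have hnv0b1 : ¬ G.Adj v0 b1 := fun h => L1 v0 b b1 hb h hbb1
  have hnv0b2 : ¬ G.Adj v0 b2 := fun h => L1 v0 b b2 hb h hbb2
  -- define c1 as the common neighbor of a1 and c
  have hna1c : ¬ G.Adj c a1 := fun h => D a c a1 ha hc hac ha1v0 haa1 h
  have ha1c : a1 ≠ c := fun h => nadj a c ha hc (h ▸ haa1)
  obtain ⟨c1, hac1, hc1c, hc1v0⟩ := getw c a1 hc hnv0a1 hna1c ha1c
  have hcc1 : G.Adj c c1 := hc1c.symm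
  have hc1m : c1 ∈ (G.neighborFinset c).erase v0 :=
    Finset.mem_erase.mpr ⟨hc1v0, (SimpleGraph.mem_neighborFinset _ _ _).mpr hcc1⟩
  have hcard1c : (((G.neighborFinset c).erase v0).erase c1).card = 1 := by
    rw [Finset.card_erase_of_mem hc1m, cardE c hc]
  obtain ⟨c2, hc2s⟩ := Finset.card_eq_one.mp hcard1c
  have hc2m : c2 ∈ ((G.neighborFinset c).erase v0).erase c1 := by rw [hc2s]; simp
  have hc2c1 : c2 ≠ c1 := (Finset.mem_erase.mp hc2m).1
  have hc2v0 : c2 ≠ v0 := (Finset.mem_erase.mp (Finset.mem_erase.mp hc2m).2).1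
  have hcc2 : G.Adj c c2 :=
    (SimpleGraph.mem_neighborFinset _ _ _).mp (Finset.mem_erase.mp (Finset.mem_erase.mp hc2m).2).2
  have hNc' : (G.neighborFinset c).erase v0 = {c1, c2} := by
    rw [← Finset.insert_erase hc1m, hc2s]
  have hnv0c1 : ¬ G.Adj v0 c1 := fun h => L1 v0 c c1 hc h hcc1
  have hnv0c2 : ¬ G.Adj v0 c2 := fun h => L1 v0 c c2 hc h hcc2
  have memNb : ∀ w, G.Adj b w → w ≠ v0 → w = b1 ∨ w = b2 := by
    intro w h hw
    have hm : w ∈ (G.neighborFinset b).erase v0 :=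
      Finset.mem_erase.mpr ⟨hw, (SimpleGraph.mem_neighborFinset _ _ _).mpr h⟩
    rw [hNb'] at hm
    simpa using hm
  have memNc : ∀ w, G.Adj c w → w ≠ v0 → w = c1 ∨ w = c2 := by
    intro w h hw
    have hm : w ∈ (G.neighborFinset c).erase v0 :=
      Finset.mem_erase.mpr ⟨hw, (SimpleGraph.mem_neighborFinset _ _ _).mpr h⟩
    rw [hNc'] at hm
    simpa using hm
  have hna1a2 : ¬ G.Adj a1 a2 := fun h => L1 a a1 a2 haa1 haa2 h
  -- edge a2-b2
  have hne_ab1 : a ≠ b1 := fun h => hnv0b1 (h ▸ ha)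
  have hne_ac1 : a ≠ c1 := fun h => hnv0c1 (h ▸ ha)
  have hna2b : ¬ G.Adj b a2 := fun h => D a b a2 ha hb hab ha2v0 haa2 h
  have ha2b : a2 ≠ b := fun h => nadj a b ha hb (h ▸ haa2)
  have ha2b2 : G.Adj a2 b2 := by
    obtain ⟨w, hw1, hw2, hwv0⟩ := getw b a2 hb hnv0a2 hna2b ha2b
    rcases memNb w hw2.symm hwv0 with rfl | rfl
    · exact absurd (L2 a1 a2 a w ha12 hna1a2 haa1.symm haa2 hab1 hw1.symm) hne_ab1
    · exact hw1
  -- edge a2-c2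
  have hna2c : ¬ G.Adj c a2 := fun h => D a c a2 ha hc hac ha2v0 haa2 h
  have ha2c : a2 ≠ c := fun h => nadj a c ha hc (h ▸ haa2)
  have ha2c2 : G.Adj a2 c2 := by
    obtain ⟨w, hw1, hw2, hwv0⟩ := getw c a2 hc hnv0a2 hna2c ha2c
    rcases memNc w hw2.symm hwv0 with rfl | rfl
    · exact absurd (L2 a1 a2 a w ha12 hna1a2 haa1.symm haa2 hac1 hw1.symm) hne_ac1
    · exact hw1
  -- edge b1-c2
  have hnb1c : ¬ G.Adj c b1 := fun h => D b c b1 hb hc hbc hb1v0 hbb1 h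
  have hb1c : b1 ≠ c := fun h => nadj b c hb hc (h ▸ hbb1)
  have hb1c2 : G.Adj b1 c2 := by
    obtain ⟨w, hw1, hw2, hwv0⟩ := getw c b1 hc hnv0b1 hnb1c hb1c
    rcases memNc w hw2.symm hwv0 with rfl | rfl
    · exact absurd hw1 (fun h => L1 a1 b1 w hab1 hac1 h)
    · exact hw1
  -- edge b2-c1
  have hnb2c : ¬ G.Adj c b2 := fun h => D b c b2 hb hc hbc hb2v0 hbb2 h
  have hb2c : b2 ≠ c := fun h => nadj b c hb hc (h ▸ hbb2)
  have hb2c1 : G.Adj b2 c1 := by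
    obtain ⟨w, hw1, hw2, hwv0⟩ := getw c b2 hc hnv0b2 hnb2c hb2c
    rcases memNc w hw2.symm hwv0 with rfl | rfl
    · exact hw1
    · exfalso
      have hnb1b2 : ¬ G.Adj b1 b2 := fun h => L1 b b1 b2 hbb1 hbb2 h
      have hne_bc2 : b ≠ w := fun h => hnv0c2 (h ▸ hb)
      exact hne_bc2 (L2 b1 b2 b w (Ne.symm hb2b1) hnb1b2 hbb1.symm hbb2 hb1c2 hw1.symm)
  -- all 45 distinctness facts
  have n01 : v0 ≠ a := ha.ne
  have n02 : v0 ≠ b := hb.ne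
  have n03 : v0 ≠ c := hc.ne
  have n04 : v0 ≠ a1 := Ne.symm ha1v0
  have n05 : v0 ≠ a2 := Ne.symm ha2v0
  have n06 : v0 ≠ b1 := Ne.symm hb1v0
  have n07 : v0 ≠ b2 := Ne.symm hb2v0
  have n08 : v0 ≠ c1 := Ne.symm hc1v0
  have n09 : v0 ≠ c2 := Ne.symm hc2v0
  have n12 : a ≠ b := hab
  have n13 : a ≠ c := hac
  have n23 : b ≠ c := hbc
  have n14 : a ≠ a1 := fun h => hnv0a1 (h ▸ ha)
  have n15 : a ≠ a2 := fun h => hnv0a2 (h ▸ ha)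
  have n16 : a ≠ b1 := hne_ab1
  have n17 : a ≠ b2 := fun h => hnv0b2 (h ▸ ha)
  have n18 : a ≠ c1 := hne_ac1
  have n19 : a ≠ c2 := fun h => hnv0c2 (h ▸ ha)
  have n24 : b ≠ a1 := fun h => hnv0a1 (h ▸ hb)
  have n25 : b ≠ a2 := fun h => hnv0a2 (h ▸ hb)
  have n26 : b ≠ b1 := fun h => hnv0b1 (h ▸ hb)
  have n27 : b ≠ b2 := fun h => hnv0b2 (h ▸ hb)
  have n28 : b ≠ c1 := fun h => hnv0c1 (h ▸ hb)
  have n29 : b ≠ c2 := fun h => hnv0c2 (h ▸ hb)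
  have n34 : c ≠ a1 := fun h => hnv0a1 (h ▸ hc)
  have n35 : c ≠ a2 := fun h => hnv0a2 (h ▸ hc)
  have n36 : c ≠ b1 := fun h => hnv0b1 (h ▸ hc)
  have n37 : c ≠ b2 := fun h => hnv0b2 (h ▸ hc)
  have n38 : c ≠ c1 := fun h => hnv0c1 (h ▸ hc)
  have n39 : c ≠ c2 := fun h => hnv0c2 (h ▸ hc)
  have n45 : a1 ≠ a2 := ha12
  have n67 : b1 ≠ b2 := Ne.symm hb2b1
  have n89 : c1 ≠ c2 := Ne.symm hc2c1
  have n46 : a1 ≠ b1 := fun h => D a b b1 ha hb hab hb1v0 (h ▸ haa1) hbb1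
  have n47 : a1 ≠ b2 := fun h => D a b b2 ha hb hab hb2v0 (h ▸ haa1) hbb2
  have n48 : a1 ≠ c1 := fun h => D a c c1 ha hc hac hc1v0 (h ▸ haa1) hcc1
  have n49 : a1 ≠ c2 := fun h => D a c c2 ha hc hac hc2v0 (h ▸ haa1) hcc2
  have n56 : a2 ≠ b1 := fun h => D a b b1 ha hb hab hb1v0 (h ▸ haa2) hbb1
  have n57 : a2 ≠ b2 := fun h => D a b b2 ha hb hab hb2v0 (h ▸ haa2) hbb2
  have n58 : a2 ≠ c1 := fun h => D a c c1 ha hc hac hc1v0 (h ▸ haa2) hcc1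
  have n59 : a2 ≠ c2 := fun h => D a c c2 ha hc hac hc2v0 (h ▸ haa2) hcc2
  have n68 : b1 ≠ c1 := fun h => D b c c1 hb hc hbc hc1v0 (h ▸ hbb1) hcc1
  have n69 : b1 ≠ c2 := fun h => D b c c2 hb hc hbc hc2v0 (h ▸ hbb1) hcc2
  have n78 : b2 ≠ c1 := fun h => D b c c1 hb hc hbc hc1v0 (h ▸ hbb2) hcc1
  have n79 : b2 ≠ c2 := fun h => D b c c2 hb hc hbc hc2v0 (h ▸ hbb2) hcc2
  -- neighborhood identities
  have hNa : G.neighborFinset a = {v0, a1, a2} :=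
    nbhd_eq (hdeg' a) ha.symm haa1 haa2 n04 n05 n45
  have hNb : G.neighborFinset b = {v0, b1, b2} :=
    nbhd_eq (hdeg' b) hb.symm hbb1 hbb2 n06 n07 n67
  have hNc : G.neighborFinset c = {v0, c1, c2} :=
    nbhd_eq (hdeg' c) hc.symm hcc1 hcc2 n08 n09 n89
  have hNa1 : G.neighborFinset a1 = {a, b1, c1} :=
    nbhd_eq (hdeg' a1) haa1.symm hab1 hac1 n16 n18 n68
  have hNa2 : G.neighborFinset a2 = {a, b2, c2} :=
    nbhd_eq (hdeg' a2) haa2.symm ha2b2 ha2c2 n17 n19 n79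
  have hNb1 : G.neighborFinset b1 = {b, a1, c2} :=
    nbhd_eq (hdeg' b1) hbb1.symm hab1.symm hb1c2 n24 n29 n49
  have hNb2 : G.neighborFinset b2 = {b, a2, c1} :=
    nbhd_eq (hdeg' b2) hbb2.symm ha2b2.symm hb2c1 n25 n28 n58
  have hNc1 : G.neighborFinset c1 = {c, a1, b2} :=
    nbhd_eq (hdeg' c1) hcc1.symm hac1.symm hb2c1.symm n34 n37 n47
  have hNc2 : G.neighborFinset c2 = {c, a2, b1} :=
    nbhd_eq (hdeg' c2) hcc2.symm ha2c2.symm hb1c2.symm n35 n36 n56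
  -- the vertex enumeration
  have hginj : Function.Injective (gfun v0 a b c a1 a2 b1 b2 c1 c2) := by
    intro i j h
    fin_cases i <;> fin_cases j <;>
      first
        | rfl
        | exact absurd h (by assumption)
        | exact absurd h.symm (by assumption)
  have hNfun : ∀ i, G.neighborFinset (gfun v0 a b c a1 a2 b1 b2 c1 c2 i) =
      (tbl i).image (gfun v0 a b c a1 a2 b1 b2 c1 c2) := by
    intro i
    fin_cases i
    · show G.neighborFinset v0 = Finset.image _ ({1,2,3} : Finset (Fin 10))
      rw [Finset.image_insert, Finset.image_insert, Finset.image_singleton]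
      exact hNv0
    · show G.neighborFinset a = Finset.image _ ({0,4,5} : Finset (Fin 10))
      rw [Finset.image_insert, Finset.image_insert, Finset.image_singleton]
      exact hNa
    · show G.neighborFinset b = Finset.image _ ({0,6,7} : Finset (Fin 10))
      rw [Finset.image_insert, Finset.image_insert, Finset.image_singleton]
      exact hNb
    · show G.neighborFinset c = Finset.image _ ({0,8,9} : Finset (Fin 10))
      rw [Finset.image_insert, Finset.image_insert, Finset.image_singleton]
      exact hNc
    · show G.neighborFinset a1 = Finset.image _ ({1,6,8} : Finset (Fin 10))
      rw [Finset.image_insert, Finset.image_insert, Finset.image_singleton]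
      exact hNa1
    · show G.neighborFinset a2 = Finset.image _ ({1,7,9} : Finset (Fin 10))
      rw [Finset.image_insert, Finset.image_insert, Finset.image_singleton]
      exact hNa2
    · show G.neighborFinset b1 = Finset.image _ ({2,4,9} : Finset (Fin 10))
      rw [Finset.image_insert, Finset.image_insert, Finset.image_singleton]
      exact hNb1
    · show G.neighborFinset b2 = Finset.image _ ({2,5,8} : Finset (Fin 10))
      rw [Finset.image_insert, Finset.image_insert, Finset.image_singleton]
      exact hNb2
    · show G.neighborFinset c1 = Finset.image _ ({3,4,7} : Finset (Fin 10))
      rw [Finset.image_insert, Finset.image_insert, Finset.image_singleton]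
      exact hNc1
    · show G.neighborFinset c2 = Finset.image _ ({3,5,6} : Finset (Fin 10))
      rw [Finset.image_insert, Finset.image_insert, Finset.image_singleton]
      exact hNc2
  have adjIff : ∀ i j : Fin 10, G.Adj (gfun v0 a b c a1 a2 b1 b2 c1 c2 i)
      (gfun v0 a b c a1 a2 b1 b2 c1 c2 j) ↔ j ∈ tbl i := by
    intro i j
    rw [← SimpleGraph.mem_neighborFinset, hNfun i, hginj.mem_finset_image]
  have hgbij : Function.Bijective (gfun v0 a b c a1 a2 b1 b2 c1 c2) :=
    (Fintype.bijective_iff_injective_and_card _).mpr ⟨hginj, by simp [hcard]⟩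
  have hpbij : Function.Bijective pLab :=
    (Fintype.bijective_iff_injective_and_card _).mpr ⟨pLab_inj, by rw [petersen_card, Fintype.card_fin]⟩
  let eV : Fin 10 ≃ V := Equiv.ofBijective _ hgbij
  let eP : Fin 10 ≃ {s : Finset (Fin 5) // s.card = 2} := Equiv.ofBijective _ hpbij
  refine ⟨⟨eV.symm.trans eP, ?_⟩⟩
  intro x y
  show petersen.Adj (eP (eV.symm x)) (eP (eV.symm y)) ↔ G.Adj x y
  conv_rhs => rw [← eV.apply_symm_apply x, ← eV.apply_symm_apply y]
  exact (tbl_adj (eV.symm x) (eV.symm y)).symm.trans (adjIff (eV.symm x) (eV.symm y)).symm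

end Moore2

theorem petersen_unique_moore :
    (∀ (V : Type) [Fintype V] (G : SimpleGraph V),
      Fintype.card V = 10 → (∀ v : V, (G.neighborSet v).ncard = 3) →
      (∀ u v : V, u ≠ v → G.Adj u v ∨ ∃ w : V, G.Adj u w ∧ G.Adj w v) →
      Nonempty (G ≃g petersen)) ∧
    (∀ u v : {s : Finset (Fin 5) // s.card = 2}, u ≠ v → ¬ petersen.Adj u v →
      ∃! w, petersen.Adj u w ∧ petersen.Adj v w) := by
  constructor
  · intro V _ G hc hd hdiam
    classical
    have hd' : ∀ v : V, G.degree v = 3 := by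
      intro v
      show (G.neighborFinset v).card = 3
      rw [SimpleGraph.neighborFinset_def, ← Set.ncard_eq_toFinset_card']
      exact hd v
    exact moore_iso hc hd' hdiam
  · have h : ∀ u v : {s : Finset (Fin 5) // s.card = 2}, u ≠ v → ¬ petersen.Adj u v →
        ∃ w, (petersen.Adj u w ∧ petersen.Adj v w) ∧
          ∀ y, (petersen.Adj u y ∧ petersen.Adj v y) → y = w := by decide
    exact h
end

section
/- Let T be a tree and let R be a set of vertices of T such that every two distinct vertices of R are adjacent or joined by a path of length 2 whose two edges receive distinct labels from a labeling of the edges incident to each vertex with at most p = 2m+n types. Then |R| ≤ 2m+n+1, and this bound is attained by the star K_{1,2m+n} with all edges of distinct types. -/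
/-!
In a tree the only path between two vertices at distance two runs through their common
neighbour, so the special 2-path witnessing that they see each other is unique. If `R` contains
two non-adjacent vertices `u, v` with common neighbour `w`, every other `x ∈ R` is adjacent to
`w`: otherwise the short routes from `u` to `x` to `v` form a walk from `u` to `v` avoiding `w`.
If `R` is a clique, any of its vertices serves as `w`. Thus `R \ {w}` lies in the neighbourhood
of `w`, and two of its vertices see each other only through `w`, so the types of their edges to
`w` are pairwise distinct: there are at most `2m + n` of them. The star `K_{1,2m+n}` with
pairwise distinct types on its edges attains the bound.
-/

open Finset SimpleGraph

namespace SimpleGraph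

variable {V : Type*} {G : SimpleGraph V}

def AdjOrCommonNeighbor (G : SimpleGraph V) (x y : V) : Prop :=
  G.Adj x y ∨ ∃ c, G.Adj x c ∧ G.Adj y c

theorem IsAcyclic.mem_support_of_adj_of_adj (hG : G.IsAcyclic) {u v w : V}
    (huw : G.Adj u w) (hwv : G.Adj w v) (huv : u ≠ v) (p : G.Walk u v) : w ∈ p.support := by
  classical
  have hpath : (Walk.cons huw (Walk.cons hwv .nil)).IsPath := by
    simp [huw.ne, hwv.ne, huv]
  have hbypass : Walk.cons huw (Walk.cons hwv .nil) = p.bypass :=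
    congrArg Subtype.val ((hG.subsingleton_path u v).elim ⟨_, hpath⟩ p.toPath)
  exact p.support_bypass_subset_support (by simp [← hbypass])

theorem AdjOrCommonNeighbor.exists_walk {x y : V} (h : G.AdjOrCommonNeighbor x y) :
    ∃ p : G.Walk x y, ∀ z ∈ p.support, z = x ∨ z = y ∨ G.Adj x z := by
  rcases h with hxy | ⟨c, hxc, hyc⟩
  · exact ⟨.cons hxy .nil, by simp⟩
  · exact ⟨.cons hxc (.cons hyc.symm .nil), by grind [Walk.support_cons, Walk.support_nil]⟩

theorem IsAcyclic.adj_of_adjOrCommonNeighbor (hG : G.IsAcyclic) {u v w x : V}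
    (huw : G.Adj u w) (hwv : G.Adj w v) (huv : u ≠ v) (hxw : x ≠ w)
    (hxu : G.AdjOrCommonNeighbor x u) (hxv : G.AdjOrCommonNeighbor x v) : G.Adj x w := by
  obtain ⟨p, hp⟩ := hxu.exists_walk
  obtain ⟨q, hq⟩ := hxv.exists_walk
  have hw := hG.mem_support_of_adj_of_adj huw hwv huv (p.reverse.append q)
  rw [Walk.mem_support_append_iff, Walk.support_reverse, List.mem_reverse] at hw
  rcases hw with hw | hw
  · exact ((hp w hw).resolve_left hxw.symm).resolve_left huw.ne'
  · exact ((hq w hw).resolve_left hxw.symm).resolve_left hwv.ne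

theorem IsAcyclic.exists_forall_adj_of_pairwise (hG : G.IsAcyclic) {R : Set V}
    (hR : R.Nonempty) (hnear : R.Pairwise G.AdjOrCommonNeighbor) :
    ∃ w, ∀ x ∈ R, x ≠ w → G.Adj x w := by
  by_cases hclique : R.Pairwise G.Adj
  · obtain ⟨w, hw⟩ := hR
    exact ⟨w, fun x hx hxw => hclique hx hw hxw⟩
  obtain ⟨u, hu, v, hv, huv, hnadj⟩ : ∃ u ∈ R, ∃ v ∈ R, u ≠ v ∧ ¬ G.Adj u v := by
    simpa [Set.Pairwise] using hclique
  obtain ⟨w, huw, hvw⟩ := (hnear hu hv huv).resolve_left hnadj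
  refine ⟨w, fun x hx hxw => ?_⟩
  by_cases hxu : x = u
  · exact hxu ▸ huw
  by_cases hxv : x = v
  · exact hxv ▸ hvw
  exact hG.adj_of_adjOrCommonNeighbor huw hvw.symm huv hxw (hnear hx hu hxu) (hnear hx hv hxv)

end SimpleGraph

noncomputable def labelSet (m n : ℕ) : Finset ℤ := (Icc (-(m : ℤ)) (m + n)).erase 0

theorem mem_labelSet {m n : ℕ} {l : ℤ} :
    l ∈ labelSet m n ↔ (1 ≤ l ∧ l ≤ (m : ℤ) + n) ∨ (-(m : ℤ) ≤ l ∧ l ≤ -1) := by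
  simp only [labelSet, mem_erase, mem_Icc]
  omega

theorem card_labelSet (m n : ℕ) : #(labelSet m n) = 2 * m + n := by
  rw [labelSet, card_erase_of_mem (by simp only [mem_Icc]; omega), Int.card_Icc]
  omega

namespace CMG

variable {V : Type} {m n : ℕ} (H : CMG V m n)

theorem lab_mem_labelSet {u v : V} (h : H.G.Adj u v) : H.lab u v ∈ labelSet m n :=
  mem_labelSet.mpr (H.lab_mem h)

theorem sees.adjOrCommonNeighbor {H : CMG V m n} {u v : V} (h : H.sees u v) :
    H.G.AdjOrCommonNeighbor u v :=
  h.imp_right fun ⟨c, huc, hvc, _⟩ => ⟨c, huc, hvc⟩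

theorem lab_ne_of_sees (hG : H.G.IsAcyclic) {x y w : V} (hxw : H.G.Adj x w)
    (hyw : H.G.Adj y w) (hxy : x ≠ y) (hs : H.sees x y) : H.lab x w ≠ H.lab y w := by
  rcases hs with hadj | ⟨c, hxc, hyc, hlab⟩
  · have := hG.mem_support_of_adj_of_adj hxw hyw.symm hxy (.cons hadj .nil)
    simp [hxw.ne', hyw.ne'] at this
  · have := hG.mem_support_of_adj_of_adj hxw hyw.symm hxy (.cons hxc (.cons hyc.symm .nil))
    obtain rfl : c = w := by grind [hxw.ne', hyw.ne', Walk.support_cons, Walk.support_nil]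
    exact hlab

theorem card_le_of_forall_sees (hG : H.G.IsAcyclic) (R : Finset V)
    (hR : ∀ u ∈ R, ∀ v ∈ R, u ≠ v → H.sees u v) : #R ≤ 2 * m + n + 1 := by
  classical
  rcases R.eq_empty_or_nonempty with rfl | hne
  · simp
  obtain ⟨w, hw⟩ := hG.exists_forall_adj_of_pairwise (R := R) hne
    fun x hx y hy hxy => (hR x hx y hy hxy).adjOrCommonNeighbor
  have hinj : #(R.erase w) ≤ #(labelSet m n) := by
    refine card_le_card_of_injOn (H.lab · w) (fun x hx => ?_) fun x hx y hy hxy => ?_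
    · obtain ⟨hxw, hx⟩ := mem_erase.mp hx
      exact H.lab_mem_labelSet (hw x hx hxw)
    · obtain ⟨hxw, hx⟩ := mem_erase.mp hx
      obtain ⟨hyw, hy⟩ := mem_erase.mp hy
      by_contra hne
      exact H.lab_ne_of_sees hG (hw x hx hxw) (hw y hy hyw) hne (hR x hx y hy hne) hxy
  have := pred_card_le_card_erase (s := R) (a := w)
  rw [card_labelSet] at hinj
  omega

end CMG

def reverseLabel (m : ℕ) (l : ℤ) : ℤ := if l ≤ m then -l else l

namespace CMG

variable {V : Type} [DecidableEq V] {m n : ℕ}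

def star (r : V) (f : V → ℤ) (hf : ∀ v ≠ r, f v ∈ labelSet m n) : CMG V m n where
  G := starGraph r
  lab u v := if u = r then (if v = r then 0 else reverseLabel m (f v))
    else if v = r then f u else 0
  lab_eq_zero u v h := by grind [starGraph_adj]
  lab_mem u v h := by grind [starGraph_adj, mem_labelSet, reverseLabel]
  lab_rev_arc u v h := by grind [starGraph_adj, mem_labelSet, reverseLabel]
  lab_rev_edge u v h := by grind [starGraph_adj, mem_labelSet, reverseLabel]

theorem star_sees {r : V} {f : V → ℤ} (hf : ∀ v ≠ r, f v ∈ labelSet m n)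
    (hinj : Set.InjOn f {v | v ≠ r}) {u v : V} (huv : u ≠ v) : (star r f hf).sees u v := by
  by_cases hu : u = r
  · exact .inl (starGraph_adj.mpr ⟨huv, .inl hu⟩)
  by_cases hv : v = r
  · exact .inl (starGraph_adj.mpr ⟨huv, .inr hv⟩)
  refine .inr ⟨r, starGraph_center_adj' (Ne.symm hu), starGraph_center_adj' (Ne.symm hv), ?_⟩
  simpa [star, hu, hv] using fun h => huv (hinj hu hv h)

end CMG

def labelOfIndex (m n i : ℕ) : ℤ := if i ≤ m + n then i else (m + n : ℤ) - i

theorem labelOfIndex_mem_labelSet {m n i : ℕ} (h0 : i ≠ 0) (hi : i ≤ 2 * m + n) :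
    labelOfIndex m n i ∈ labelSet m n := by
  rw [mem_labelSet, labelOfIndex]
  split_ifs <;> omega

theorem labelOfIndex_injOn (m n : ℕ) : Set.InjOn (labelOfIndex m n) {i | i ≠ 0} := by
  intro i hi j hj h
  simp only [labelOfIndex, Set.mem_ofPred_eq] at hi hj h
  split_ifs at h <;> omega

theorem exists_isTree_forall_sees (m n : ℕ) :
    ∃ H : CMG (Fin (2 * m + n + 1)) m n, H.G.IsTree ∧
      ∀ u v : Fin (2 * m + n + 1), u ≠ v → H.sees u v := by
  have hf (i : Fin (2 * m + n + 1)) (hi : i ≠ 0) : labelOfIndex m n i ∈ labelSet m n :=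
    labelOfIndex_mem_labelSet (Fin.val_ne_zero_iff.mpr hi) (Nat.le_of_lt_succ i.isLt)
  have hinj : Set.InjOn (fun i : Fin (2 * m + n + 1) => labelOfIndex m n i) {i | i ≠ 0} :=
    (labelOfIndex_injOn m n).comp Fin.val_injective.injOn fun _ hi => Fin.val_ne_zero_iff.mpr hi
  exact ⟨.star 0 _ hf, isTree_starGraph 0, fun u v huv => CMG.star_sees hf hinj huv⟩

theorem tree_relative_clique (m n : ℕ) :
    (∀ (V : Type) (H : CMG V m n), H.G.IsTree →
      ∀ R : Finset V, (∀ u ∈ R, ∀ v ∈ R, u ≠ v → H.sees u v) →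
        R.card ≤ 2 * m + n + 1) ∧
    (∃ H : CMG (Fin (2 * m + n + 1)) m n, H.G.IsTree ∧
      ∀ u v : Fin (2 * m + n + 1), u ≠ v → H.sees u v) :=
  ⟨fun _ H hT R hR => H.card_le_of_forall_sees hT.isAcyclic R hR, exists_isTree_forall_sees m n⟩
end

section
/- For every pair (m,n) with 2m+n ≥ 1, there exists an (m,n)-colored mixed graph on (2m+n)² + (2m+n) + 1 vertices whose underlying graph is a partial 2-tree (K₄-minor-free) and in which every two distinct vertices are adjacent or joined by a special 2-path. -/
/-- `G` has an `H`-minor: disjoint nonempty connected branch sets indexed by the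
vertices of `H`, with an edge of `G` between branch sets of adjacent vertices of `H`. -/
def HasMinor {V W : Type} (G : SimpleGraph V) (H : SimpleGraph W) : Prop :=
  ∃ B : W → Set V, (∀ i, (B i).Nonempty) ∧ Pairwise (Function.onFun Disjoint B) ∧
    (∀ i, (G.induce (B i)).Connected) ∧
    ∀ ⦃i j : W⦄, H.Adj i j → ∃ u ∈ B i, ∃ v ∈ B j, G.Adj u v

/-- Planarity via Wagner's theorem: no `K₅` minor and no `K_{3,3}` minor. -/
def IsPlanar {V : Type} (G : SimpleGraph V) : Prop :=
  ¬ HasMinor G (SimpleGraph.completeGraph (Fin 5)) ∧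
  ¬ HasMinor G (completeBipartiteGraph (Fin 3) (Fin 3))

/-!
The apex `x` sees every vertex directly. Two vertices in different stars `i ≠ i'` reach `x` along
edges of the distinct types `i` and `i'`, and two leaves of one star reach its centre along edges
of distinct types; every other pair is adjacent. For minors: at most one branch set of a `K₄`-minor
contains `x`, so the other three form a `K₃`-minor of the star forest left after deleting the edges
at `x`. But connected branch sets in a star forest lie in a single star, and each edge between two
of them contains that star's centre, which would then lie in two of the three disjoint sets.
-/

open SimpleGraph

lemma SimpleGraph.Reachable.apply_eq_of_adj {V α : Type*} {G : SimpleGraph V} {f : V → α}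
    (hf : ∀ ⦃u v⦄, G.Adj u v → f u = f v) {u v : V} (h : G.Reachable u v) : f u = f v := by
  simpa [Relation.reflTransGen_eq_self] using ((reachable_iff_reflTransGen u v).1 h).lift f hf

lemma HasMinor.map {V V' W : Type} {G : SimpleGraph V} {G' : SimpleGraph V'}
    {K : SimpleGraph W} (f : G ↪g G') (h : HasMinor G K) : HasMinor G' K := by
  obtain ⟨B, hne, hdisj, hconn, hadj⟩ := h
  refine ⟨fun i => f '' B i, fun i => (hne i).image f, fun i j hij => ?_, fun i => ?_,
    fun i j hij => ?_⟩
  · exact (Set.disjoint_image_iff f.injective).2 (hdisj hij)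
  · let φ : G.induce (B i) →g G'.induce (f '' B i) :=
      ⟨fun u => ⟨f u, u.1, u.2, rfl⟩, fun h => f.map_adj_iff.2 h⟩
    refine (hconn i).map φ ?_
    rintro ⟨_, u, hu, rfl⟩
    exact ⟨⟨u, hu⟩, rfl⟩
  · obtain ⟨u, hu, v, hv, huv⟩ := hadj hij
    exact ⟨f u, ⟨u, hu, rfl⟩, f v, ⟨v, hv, rfl⟩, f.map_adj_iff.2 huv⟩

lemma HasMinor.deleteIncidenceSet {V : Type} {G : SimpleGraph V} {k : ℕ}
    (h : HasMinor G (completeGraph (Fin (k + 1)))) (x : V) :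
    HasMinor (G.deleteIncidenceSet x) (completeGraph (Fin k)) := by
  obtain ⟨B, hne, hdisj, hconn, hadj⟩ := h
  obtain ⟨j, hj⟩ : ∃ j : Fin (k + 1), ∀ i, x ∉ B (j.succAbove i) := by
    by_cases hx : ∃ j, x ∈ B j
    · obtain ⟨j, hxj⟩ := hx
      exact ⟨j, fun i hxi => Set.disjoint_left.1 (hdisj (Fin.succAbove_ne j i)) hxi hxj⟩
    · push Not at hx
      exact ⟨0, fun i => hx _⟩
  have hkeep : ∀ ⦃i i' u v⦄, u ∈ B (j.succAbove i) → v ∈ B (j.succAbove i') → G.Adj u v →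
      (G.deleteIncidenceSet x).Adj u v := fun i i' u v hu hv huv =>
    deleteIncidenceSet_adj.2 ⟨huv, ne_of_mem_of_not_mem hu (hj i), ne_of_mem_of_not_mem hv (hj i')⟩
  refine ⟨fun i => B (j.succAbove i), fun i => hne _,
    fun i i' h => hdisj (Fin.succAbove_right_injective.ne h), fun i => ?_, fun i i' h => ?_⟩
  · exact (hconn _).map ⟨id, fun {u v} huv => hkeep u.2 v.2 huv⟩ Function.surjective_id
  · obtain ⟨u, hu, v, hv, huv⟩ := hadj (Fin.succAbove_right_injective.ne h)
    exact ⟨u, hu, v, hv, hkeep hu hv huv⟩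

/-- The components are stars, `c u` being the centre of the star containing `u`. -/
def SimpleGraph.IsStarForest {V : Type*} (G : SimpleGraph V) : Prop :=
  ∃ c : V → V, ∀ ⦃u v⦄, G.Adj u v → c u = c v ∧ (u = c u ∨ v = c v)

lemma SimpleGraph.IsStarForest.not_hasMinor_completeGraph_three {V : Type} {G : SimpleGraph V}
    (hG : G.IsStarForest) : ¬ HasMinor G (completeGraph (Fin 3)) := by
  obtain ⟨c, hc⟩ := hG
  rintro ⟨B, hne, hdisj, hconn, hadj⟩
  have hconst : ∀ i, ∀ u ∈ B i, ∀ v ∈ B i, c u = c v := fun i u hu v hv =>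
    ((hconn i).preconnected ⟨u, hu⟩ ⟨v, hv⟩).apply_eq_of_adj (f := c ∘ Subtype.val)
      fun _ _ h => (hc h).1
  obtain ⟨u₀, hu₀⟩ := hne 0
  have hcentre : ∀ i, ∀ u ∈ B i, c u = c u₀ := by
    intro i u hu
    obtain rfl | hi := eq_or_ne i 0
    · exact hconst _ u hu u₀ hu₀
    obtain ⟨v, hv, v', hv', h⟩ := hadj hi
    exact (hconst i u hu v hv).trans ((hc h).1.trans (hconst 0 v' hv' u₀ hu₀))
  have hmem : ∀ i j, i ≠ j → c u₀ ∈ B i ∨ c u₀ ∈ B j := by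
    intro i j hij
    obtain ⟨u, hu, v, hv, h⟩ := hadj hij
    rcases (hc h).2 with hu' | hv'
    · exact Or.inl (hcentre i u hu ▸ hu' ▸ hu)
    · exact Or.inr (hcentre j v hv ▸ hv' ▸ hv)
  have hnot : ∀ i j, i ≠ j → c u₀ ∈ B i → c u₀ ∉ B j := fun i j hij hi hj =>
    Set.disjoint_left.1 (hdisj hij) hi hj
  rcases hmem 0 1 (by decide) with h | h
  · exact (hmem 1 2 (by decide)).elim (hnot 0 1 (by decide) h) (hnot 0 2 (by decide) h)
  · exact (hmem 0 2 (by decide)).elim (hnot 1 0 (by decide) h) (hnot 1 2 (by decide) h)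

lemma not_hasMinor_completeGraph_four_of_isStarForest {V : Type} {G : SimpleGraph V} (x : V)
    (h : (G.deleteIncidenceSet x).IsStarForest) : ¬ HasMinor G (completeGraph (Fin 4)) :=
  fun hG => h.not_hasMinor_completeGraph_three (hG.deleteIncidenceSet x)

namespace CMG

variable {m n : ℕ}

noncomputable def labels (m n : ℕ) : Finset ℤ :=
  Finset.Icc (-(m : ℤ)) (-1) ∪ Finset.Icc 1 ((m : ℤ) + n)

lemma mem_labels {ℓ : ℤ} :
    ℓ ∈ labels m n ↔ (1 ≤ ℓ ∧ ℓ ≤ (m : ℤ) + n) ∨ (-(m : ℤ) ≤ ℓ ∧ ℓ ≤ -1) := by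
  simp only [labels, Finset.mem_union, Finset.mem_Icc]
  tauto

lemma card_labels : (labels m n).card = 2 * m + n := by
  rw [labels, Finset.card_union_of_disjoint, Int.card_Icc, Int.card_Icc]
  · omega
  · exact Finset.disjoint_left.2 fun ℓ h h' => by simp only [Finset.mem_Icc] at h h'; omega

/-- The label of `vu` given the label `ℓ` of `uv`. -/
def revLabel (m : ℕ) (ℓ : ℤ) : ℤ := if ℓ ≤ (m : ℤ) then -ℓ else ℓ

lemma revLabel_mem_labels {ℓ : ℤ} (h : ℓ ∈ labels m n) : revLabel m ℓ ∈ labels m n := by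
  rw [mem_labels] at h ⊢
  unfold revLabel
  split_ifs <;> omega

lemma revLabel_revLabel {ℓ : ℤ} (h : ℓ ∈ labels m n) : revLabel m (revLabel m ℓ) = ℓ := by
  rw [mem_labels] at h
  unfold revLabel
  split_ifs <;> omega

section Orientation

variable {W : Type} (o : W → W → Option (labels m n))

/-- `o u v = some ℓ` orients the pair as `u → v` with label `ℓ` read from `u`. -/
def orientedLab (u v : W) : ℤ :=
  match o u v, o v u with
  | some ℓ, _ => ℓ
  | none, some ℓ => revLabel m ℓ
  | none, none => 0

variable {o}

lemma orientedLab_of_eq_some {u v : W} {ℓ : labels m n} (h : o u v = some ℓ) :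
    orientedLab o u v = ℓ := by
  simp [orientedLab, h]

lemma orientedLab_of_eq_none_of_eq_some {u v : W} {ℓ : labels m n} (huv : o u v = none)
    (hvu : o v u = some ℓ) : orientedLab o u v = revLabel m ℓ := by
  simp [orientedLab, huv, hvu]

lemma orientedLab_of_eq_none {u v : W} (huv : o u v = none) (hvu : o v u = none) :
    orientedLab o u v = 0 := by
  simp [orientedLab, huv, hvu]

lemma orientedLab_mem_and_swap (ho : ∀ u v, o u v = none ∨ o v u = none) {u v : W}
    (h : o u v ≠ none ∨ o v u ≠ none) :
    orientedLab o u v ∈ labels m n ∧ orientedLab o v u = revLabel m (orientedLab o u v) := by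
  rcases huv : o u v with _ | ℓ
  · obtain ⟨ℓ, hvu⟩ := Option.ne_none_iff_exists'.1 (h.resolve_left (not_not.2 huv))
    rw [orientedLab_of_eq_none_of_eq_some huv hvu, orientedLab_of_eq_some hvu]
    exact ⟨revLabel_mem_labels ℓ.2, (revLabel_revLabel ℓ.2).symm⟩
  · have hvu := (ho u v).resolve_left (by simp [huv])
    rw [orientedLab_of_eq_some huv, orientedLab_of_eq_none_of_eq_some hvu huv]
    exact ⟨ℓ.2, rfl⟩

variable (o)

def ofOrientation (ho : ∀ u v, o u v = none ∨ o v u = none) : CMG W m n where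
  G :=
    { Adj := fun u v => o u v ≠ none ∨ o v u ≠ none
      symm := ⟨fun _ _ => Or.symm⟩
      loopless := ⟨fun u h => by simp [(ho u u).elim id id] at h⟩ }
  lab := orientedLab o
  lab_eq_zero := fun u v h =>
    orientedLab_of_eq_none (not_not.1 (not_or.1 h).1) (not_not.1 (not_or.1 h).2)
  lab_mem := fun u v h => mem_labels.1 (orientedLab_mem_and_swap ho h).1
  lab_rev_arc := fun u v h hle => by
    rw [(orientedLab_mem_and_swap ho h).2, revLabel, if_pos hle]
  lab_rev_edge := fun u v h hlt => by
    rw [(orientedLab_mem_and_swap ho h).2, revLabel, if_neg (not_le.2 hlt)]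

lemma sees_ofOrientation_of_eq_some (ho : ∀ u v, o u v = none ∨ o v u = none) {u v w : W}
    {s t : labels m n} (hs : o u w = some s) (ht : o v w = some t) (hst : s ≠ t) :
    (ofOrientation o ho).sees u v := by
  refine Or.inr ⟨w, Or.inl (by simp [hs]), Or.inl (by simp [ht]), ?_⟩
  simpa only [ofOrientation, orientedLab_of_eq_some hs, orientedLab_of_eq_some ht] using
    Subtype.val_injective.ne hst

end Orientation

variable {V W : Type}

def comap (H : CMG V m n) (f : W → V) : CMG W m n where
  G := H.G.comap f
  lab u v := H.lab (f u) (f v)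
  lab_eq_zero _ _ h := H.lab_eq_zero h
  lab_mem _ _ h := H.lab_mem h
  lab_rev_arc _ _ h := H.lab_rev_arc h
  lab_rev_edge _ _ h := H.lab_rev_edge h

lemma sees_comap {H : CMG V m n} {f : W → V} (hf : Function.Surjective f) {u v : W}
    (h : H.sees (f u) (f v)) : (H.comap f).sees u v := by
  rcases h with h | ⟨w, huw, hvw, hlab⟩
  · exact Or.inl h
  · obtain ⟨w, rfl⟩ := hf w
    exact Or.inr ⟨w, huw, hvw, hlab⟩

end CMG

section ApexStars

/-- `none` is the apex, `some (i, none)` the centre of the `i`-th star and `some (i, some j)` its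
`j`-th leaf. -/
abbrev ApexStars (T : Type) := Option (T × Option T)

lemma card_apexStars {T : Type} [Fintype T] :
    Fintype.card (ApexStars T) = Fintype.card T ^ 2 + Fintype.card T + 1 := by
  simp only [Fintype.card_option, Fintype.card_prod]
  ring

variable {T : Type} [DecidableEq T]

/-- `upType u v = some t` when `uv` is an edge of type `t` and `v` is the apex or the centre of
the star of `u`. -/
def upType : ApexStars T → ApexStars T → Option T
  | some (i, _), none => some i
  | some (i, some j), some (i', none) => if i = i' then some j else none
  | _, _ => none

def starCentre : ApexStars T → ApexStars T
  | none => none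
  | some (i, _) => some (i, none)

lemma upType_eq_none_or (u v : ApexStars T) : upType u v = none ∨ upType v u = none := by
  rcases u with _ | ⟨i, _ | j⟩ <;> rcases v with _ | ⟨i', _ | j'⟩ <;> simp [upType]

lemma starCentre_eq_of_upType_eq_some {u v : ApexStars T} {t : T} (h : upType u v = some t)
    (hv : v ≠ none) : starCentre u = starCentre v ∧ v = starCentre v := by
  rcases u with _ | ⟨i, _ | j⟩ <;> rcases v with _ | ⟨i', _ | j'⟩ <;>
    simp_all [upType, starCentre]

lemma isStarForest_deleteIncidenceSet_none {G : SimpleGraph (ApexStars T)}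
    (hG : ∀ ⦃u v⦄, G.Adj u v → upType u v ≠ none ∨ upType v u ≠ none) :
    (G.deleteIncidenceSet none).IsStarForest := by
  refine ⟨starCentre, fun u v h => ?_⟩
  obtain ⟨huv, hu, hv⟩ := deleteIncidenceSet_adj.1 h
  rcases hG huv with h' | h'
  · obtain ⟨t, ht⟩ := Option.ne_none_iff_exists'.1 h'
    obtain ⟨hc, hvc⟩ := starCentre_eq_of_upType_eq_some ht hv
    exact ⟨hc, Or.inr hvc⟩
  · obtain ⟨t, ht⟩ := Option.ne_none_iff_exists'.1 h'
    obtain ⟨hc, huc⟩ := starCentre_eq_of_upType_eq_some ht hu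
    exact ⟨hc.symm, Or.inl huc⟩

lemma upType_ne_none_or_exists_ne {u v : ApexStars T} (huv : u ≠ v) :
    (upType u v ≠ none ∨ upType v u ≠ none) ∨
      ∃ w s t, upType u w = some s ∧ upType v w = some t ∧ s ≠ t := by
  rcases u with _ | ⟨i, o⟩ <;> rcases v with _ | ⟨i', o'⟩
  · exact absurd rfl huv
  · simp [upType]
  · simp [upType]
  by_cases hi : i = i'
  · subst hi
    rcases o with _ | j <;> rcases o' with _ | j'
    · exact absurd rfl huv
    · simp [upType]
    · simp [upType]
    · exact Or.inr ⟨some (i, none), j, j', by simp [upType], by simp [upType],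
        by simpa using huv⟩
  · exact Or.inr ⟨none, i, i', rfl, rfl, hi⟩

end ApexStars

theorem exists_partial_two_tree_absolute_clique_general (m n : ℕ) :
    ∃ H : CMG (Fin ((2 * m + n) ^ 2 + (2 * m + n) + 1)) m n,
      ¬ HasMinor H.G (SimpleGraph.completeGraph (Fin 4)) ∧
      ∀ u v : Fin ((2 * m + n) ^ 2 + (2 * m + n) + 1), u ≠ v → H.sees u v := by
  let H : CMG (ApexStars (CMG.labels m n)) m n := CMG.ofOrientation upType upType_eq_none_or
  have hcard : Fintype.card (ApexStars (CMG.labels m n)) = (2 * m + n) ^ 2 + (2 * m + n) + 1 := by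
    rw [card_apexStars, Fintype.card_coe, CMG.card_labels]
  let e := (Fintype.equivFinOfCardEq hcard).symm
  refine ⟨H.comap e, fun hK => ?_, fun u v huv => CMG.sees_comap e.surjective ?_⟩
  · exact not_hasMinor_completeGraph_four_of_isStarForest none
      (isStarForest_deleteIncidenceSet_none fun _ _ h => h)
      (hK.map (Embedding.comap e.toEmbedding H.G))
  · rcases upType_ne_none_or_exists_ne (e.injective.ne huv) with h | ⟨w, s, t, hs, ht, hst⟩
    · exact Or.inl h
    · exact CMG.sees_ofOrientation_of_eq_some upType upType_eq_none_or hs ht hst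

theorem exists_partial_two_tree_absolute_clique (m n : ℕ) (hp : 1 ≤ 2 * m + n) :
    ∃ H : CMG (Fin ((2 * m + n) ^ 2 + (2 * m + n) + 1)) m n,
      ¬ HasMinor H.G (SimpleGraph.completeGraph (Fin 4)) ∧
      ∀ u v : Fin ((2 * m + n) ^ 2 + (2 * m + n) + 1), u ≠ v → H.sees u v :=
  exists_partial_two_tree_absolute_clique_general m n
end

section
/- Let p = 2m+n ≥ 3. If H is a planar (m,n)-colored mixed graph and v₁,...,v_t are pairwise non-adjacent vertices all adjacent to a common vertex v with the same adjacency type α, and every pair v_i, v_j is joined in H by a special 2-path avoiding v, then t ≤ 2p. -/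
/-!
For `i ≠ j` let `X i j` be the middle vertex of a special 2-path from `vᵢ` to `vⱼ` avoiding `v`.
Among five of the `vᵢ`, some `w ≠ v` is adjacent to three of them: otherwise `{v}` and the
stars at `v₃` and `v₄` through the midpoints `X i 3`, `X i 4` (`i < 3`) would be pairwise
disjoint, connected and adjacent to each of `v₀, v₁, v₂`, a `K₃,₃` minor. The same argument,
with `{w}` and the star at a non-neighbour of `w`, shows that `w` is adjacent to every `vᵢ`.
If `t > 2p`, three of them, `vₚ, v_q, v_r`, have the same adjacency type at `w`, so `w` is
none of `X p q`, `X q r`, `X r p`. Two of these midpoints cannot coincide, since `vₚ, v_q, v_r`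
have at most two common neighbours; so contracting `v vₗ`, `w vₗ'`, `vₚ (X p q)`,
`v_q (X q r)` and `v_r (X r p)` for two further indices `l, l'` produces a `K₅` minor.
-/

open SimpleGraph Function Set

section Minors

variable {V W α β : Type} {G : SimpleGraph V}

lemma SimpleGraph.induce_insert_connected {c : V} {s : Set V} (h : ∀ x ∈ s, G.Adj c x) :
    (G.induce (insert c s)).Connected :=
  G.induce_connected_of_patches c (mem_insert c s) fun {x} hx => by
    rcases hx with rfl | hx
    · exact ⟨{x}, by simp, rfl, rfl, .rfl⟩
    · exact ⟨{c, x}, by simp [pair_subset_iff, hx], by simp, by simp,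
        (G.induce_pair_connected_of_adj (h x hx)).preconnected _ _⟩

/-- `S` can serve as a branch set adjacent to each of the singleton branch sets `{a i}`. -/
def IsHub (G : SimpleGraph V) (a : α → V) (S : Set V) : Prop :=
  (G.induce S).Connected ∧ (∀ i, a i ∉ S) ∧ ∀ i, ∃ x ∈ S, G.Adj (a i) x

lemma isHub_singleton {a : α → V} {x : V} (h : ∀ i, G.Adj (a i) x) : IsHub G a {x} :=
  ⟨by simp, fun i hi => (h i).ne hi, fun i => ⟨x, rfl, h i⟩⟩

lemma isHub_insert_range {a s : α → V} {c : V} (has : ∀ i, G.Adj (a i) (s i))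
    (hcs : ∀ i, G.Adj c (s i)) (hac : ∀ i, a i ≠ c) (has' : ∀ i k, a i ≠ s k) :
    IsHub G a (insert c (range s)) := by
  refine ⟨G.induce_insert_connected (by simpa using hcs), fun i hi => ?_,
    fun i => ⟨s i, by simp, has i⟩⟩
  obtain hi | ⟨k, hk⟩ := hi
  exacts [hac i hi, has' i k hk.symm]

lemma hasMinor_completeBipartiteGraph_of_isHub [Nonempty α] {a : α → V} (ha : Injective a)
    {B : β → Set V} (hB : ∀ j, IsHub G a (B j)) (hdisj : Pairwise (Disjoint on B)) :
    HasMinor G (completeBipartiteGraph α β) := by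
  refine ⟨Sum.elim (fun i => {a i}) B, ?_, ?_, ?_, ?_⟩
  · rintro (i | j)
    · exact singleton_nonempty _
    · obtain ⟨x, hx, -⟩ := (hB j).2.2 (Classical.arbitrary α)
      exact ⟨x, hx⟩
  · rintro (i | j) (i' | j') h
    · simpa [onFun] using ha.ne fun e => h (congrArg Sum.inl e)
    · simpa [onFun] using (hB j').2.1 i
    · simpa [onFun] using (hB j).2.1 i'
    · exact hdisj fun e => h (congrArg Sum.inr e)
  · rintro (i | j)
    exacts [by simp, (hB j).1]
  · rintro (i | j) (i' | j') h
    · simp at h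
    · obtain ⟨x, hx, hax⟩ := (hB j').2.2 i
      exact ⟨a i, rfl, x, hx, hax⟩
    · obtain ⟨x, hx, hax⟩ := (hB j).2.2 i'
      exact ⟨x, hx, a i', rfl, hax.symm⟩
    · simp at h

lemma IsPlanar.not_pairwise_disjoint_of_isHub (hG : IsPlanar G) {a : Fin 3 → V}
    (ha : Injective a) {S₀ S₁ S₂ : Set V} (h₀ : IsHub G a S₀) (h₁ : IsHub G a S₁)
    (h₂ : IsHub G a S₂) : ¬ (Disjoint S₀ S₁ ∧ Disjoint S₀ S₂ ∧ Disjoint S₁ S₂) := by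
  rintro ⟨h₀₁, h₀₂, h₁₂⟩
  refine hG.2 (hasMinor_completeBipartiteGraph_of_isHub ha (B := ![S₀, S₁, S₂])
    (fun j => by fin_cases j <;> assumption) fun i j hij => ?_)
  fin_cases i <;> fin_cases j <;> first | exact absurd rfl hij | simp [onFun, *, disjoint_comm]

lemma injective_vecCons_three {a b c : V} (hab : a ≠ b) (hbc : b ≠ c) (hca : c ≠ a) :
    Injective ![a, b, c] := by
  simp only [Matrix.vecCons, Fin.cons_injective_iff]
  simp [hab, hbc, hca.symm, injective_of_subsingleton]

lemma IsPlanar.eq_or_eq_or_eq_of_forall_adj (hG : IsPlanar G) {a : Fin 3 → V}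
    (ha : Injective a) {x y z : V} (hx : ∀ i, G.Adj (a i) x) (hy : ∀ i, G.Adj (a i) y)
    (hz : ∀ i, G.Adj (a i) z) : x = y ∨ x = z ∨ y = z := by
  by_contra! hne
  exact hG.not_pairwise_disjoint_of_isHub ha (isHub_singleton hx) (isHub_singleton hy)
    (isHub_singleton hz) (by simpa using hne)

lemma hasMinor_of_contract_matching {H : SimpleGraph W} {u x : W → V} (hu : Injective u)
    (hx : Injective x) (hux : ∀ i j, u i ≠ x j) (hadj : ∀ i, G.Adj (u i) (x i))
    (hH : ∀ i j, H.Adj i j → G.Adj (x i) (u j) ∨ G.Adj (x j) (u i)) : HasMinor G H := by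
  refine ⟨fun i => {u i, x i}, fun i => insert_nonempty _ _, fun i j hij => ?_,
    fun i => G.induce_pair_connected_of_adj (hadj i), fun i j h => ?_⟩
  · simp [onFun, hux, (hux _ _).symm, (hu.ne hij).symm, (hx.ne hij).symm]
  · rcases hH i j h with h | h
    · exact ⟨x i, by simp, u j, by simp, h⟩
    · exact ⟨u i, by simp, x j, by simp, h.symm⟩

end Minors

section IndependentNeighbors

variable {V ι κ : Type} {G : SimpleGraph V}

/-- `X i j` is the middle vertex of a 2-path from `vs i` to `vs j` avoiding `v`. -/
structure PairwiseLinked (G : SimpleGraph V) (v : V) (vs : ι → V) (X : ι → ι → V) : Prop where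
  injective : Injective vs
  indep : Pairwise fun i j => ¬ G.Adj (vs i) (vs j)
  adj_apex : ∀ i, G.Adj v (vs i)
  mid_ne_apex : ∀ ⦃i j⦄, i ≠ j → X i j ≠ v
  adj_mid_left : ∀ ⦃i j⦄, i ≠ j → G.Adj (vs i) (X i j)
  adj_mid_right : ∀ ⦃i j⦄, i ≠ j → G.Adj (vs j) (X i j)

def fan (vs : ι → V) (X : ι → ι → V) (b : κ → ι) (d : ι) : Set V :=
  insert (vs d) (range fun k => X (b k) d)

namespace PairwiseLinked

variable {v : V} {vs : ι → V} {X : ι → ι → V} (h : PairwiseLinked G v vs X)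
include h

lemma ne_of_adj {x : V} {i : ι} (hx : G.Adj (vs i) x) (j : ι) : x ≠ vs j := by
  rintro rfl
  rcases eq_or_ne i j with rfl | hij
  exacts [hx.ne rfl, h.indep hij hx]

lemma isHub_apex (b : κ → ι) : IsHub G (vs ∘ b) {v} :=
  isHub_singleton fun k => (h.adj_apex (b k)).symm

lemma isHub_fan {b : κ → ι} {d : ι} (hd : ∀ k, b k ≠ d) : IsHub G (vs ∘ b) (fan vs X b d) :=
  isHub_insert_range (fun k => h.adj_mid_left (hd k)) (fun k => h.adj_mid_right (hd k))
    (fun k => h.injective.ne (hd k)) fun _ k => (h.ne_of_adj (h.adj_mid_left (hd k)) _).symm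

lemma disjoint_apex_fan {b : κ → ι} {d : ι} (hd : ∀ k, b k ≠ d) : Disjoint {v} (fan vs X b d) := by
  simpa [fan] using ⟨(h.adj_apex d).ne, fun k => h.mid_ne_apex (hd k)⟩

lemma exists_adj_three (hG : IsPlanar G) {e : Fin 5 → ι} (he : Injective e) :
    ∃ w ≠ v, ∃ b : Fin 3 → ι, Injective b ∧ ∀ k, G.Adj (vs (b k)) w := by
  by_contra! hno
  set b : Fin 3 → ι := e ∘ Fin.castLE (by norm_num)
  have hb : Injective b := he.comp (Fin.castLE_injective _)
  have hbd : ∀ k, b k ≠ e 3 ∧ b k ≠ e 4 := fun k =>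
    ⟨he.ne (by fin_cases k <;> decide), he.ne (by fin_cases k <;> decide)⟩
  -- otherwise the common midpoint would be adjacent to `vs (b i)`, `vs (e 3)` and `vs (e 4)`
  have hmid : ∀ i k, X (b i) (e 3) ≠ X (b k) (e 4) := by
    intro i k hik
    obtain ⟨j, hj⟩ := hno _ (h.mid_ne_apex (hbd i).1) (e ∘ ![Fin.castLE (by norm_num) i, 3, 4])
      (he.comp (by fin_cases i <;> decide))
    fin_cases j
    exacts [hj (h.adj_mid_left (hbd i).1), hj (h.adj_mid_right (hbd i).1),
      hj (hik ▸ h.adj_mid_right (hbd k).2)]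
  refine hG.not_pairwise_disjoint_of_isHub (h.injective.comp hb) (h.isHub_apex b)
    (h.isHub_fan fun k => (hbd k).1) (h.isHub_fan fun k => (hbd k).2)
    ⟨h.disjoint_apex_fan fun k => (hbd k).1, h.disjoint_apex_fan fun k => (hbd k).2, ?_⟩
  simp only [fan, disjoint_insert_left, disjoint_insert_right, mem_insert_iff, mem_range,
    not_or, not_exists, disjoint_range_iff]
  exact ⟨⟨h.injective.ne (he.ne (by decide)), fun k => h.ne_of_adj (h.adj_mid_left (hbd k).1) _⟩,
    fun k => h.ne_of_adj (h.adj_mid_left (hbd k).2) _, hmid⟩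

lemma adj_of_adj_three (hG : IsPlanar G) {w : V} (hwv : w ≠ v) {b : Fin 3 → ι}
    (hb : Injective b) (hw : ∀ k, G.Adj (vs (b k)) w) (d : ι) : G.Adj (vs d) w := by
  by_contra hd
  have hbd : ∀ k, b k ≠ d := fun k e => hd (e ▸ hw k)
  refine hG.not_pairwise_disjoint_of_isHub (h.injective.comp hb) (h.isHub_apex b)
    (isHub_singleton hw) (h.isHub_fan hbd)
    ⟨disjoint_singleton.2 hwv.symm, h.disjoint_apex_fan hbd, ?_⟩
  simpa [fan] using ⟨h.ne_of_adj (hw 0) d, fun k e => hd (e ▸ h.adj_mid_right (hbd k))⟩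

lemma mid_pairwise_ne (hG : IsPlanar G) {w : V} (hwv : w ≠ v) (hw : ∀ i, G.Adj (vs i) w)
    {p q r : ι} (hpq : p ≠ q) (hqr : q ≠ r) (hrp : r ≠ p)
    (hXw : X p q ≠ w ∧ X q r ≠ w ∧ X r p ≠ w) :
    X p q ≠ X q r ∧ X q r ≠ X r p ∧ X r p ≠ X p q := by
  -- a coincidence among the midpoints gives a third common neighbour of `vs p, vs q, vs r`
  have hcommon : ∀ u, u ≠ v → u ≠ w → G.Adj (vs p) u → G.Adj (vs q) u → G.Adj (vs r) u →
      False := by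
    intro u huv huw hp hq hr
    rcases hG.eq_or_eq_or_eq_of_forall_adj (x := v) (y := w) (z := u)
      (h.injective.comp (injective_vecCons_three hpq hqr hrp))
      (fun _ => (h.adj_apex _).symm) (fun _ => hw _) (by simp [Fin.forall_fin_succ, hp, hq, hr])
      with e | e | e
    exacts [hwv e.symm, huv e.symm, huw e.symm]
  refine ⟨fun e => ?_, fun e => ?_, fun e => ?_⟩
  · exact hcommon _ (h.mid_ne_apex hpq) hXw.1 (h.adj_mid_left hpq) (h.adj_mid_right hpq)
      (e ▸ h.adj_mid_right hqr)
  · exact hcommon _ (h.mid_ne_apex hqr) hXw.2.1 (e ▸ h.adj_mid_right hrp) (h.adj_mid_left hqr)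
      (h.adj_mid_right hqr)
  · exact hcommon _ (h.mid_ne_apex hrp) hXw.2.2 (h.adj_mid_right hrp)
      (e ▸ h.adj_mid_right hpq) (h.adj_mid_left hrp)

lemma mid_eq_of_forall_adj (hG : IsPlanar G) {w : V} (hwv : w ≠ v)
    (hw : ∀ i, G.Adj (vs i) w) {l l' p q r : ι} (he : Injective ![l, l', p, q, r]) :
    X p q = w ∨ X q r = w ∨ X r p = w := by
  by_contra! hXw
  have hpq : p ≠ q := by simpa using he.ne (show (2 : Fin 5) ≠ 3 by decide)
  have hqr : q ≠ r := by simpa using he.ne (show (3 : Fin 5) ≠ 4 by decide)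
  have hrp : r ≠ p := by simpa using he.ne (show (4 : Fin 5) ≠ 2 by decide)
  obtain ⟨hxy, hyz, hzx⟩ := h.mid_pairwise_ne hG hwv hw hpq hqr hrp hXw
  have hx : ∀ j, ∃ i, G.Adj (vs i) (![v, w, X p q, X q r, X r p] j) := by
    intro j
    fin_cases j
    exacts [⟨p, (h.adj_apex p).symm⟩, ⟨p, hw p⟩, ⟨p, h.adj_mid_left hpq⟩,
      ⟨q, h.adj_mid_left hqr⟩, ⟨r, h.adj_mid_left hrp⟩]
  refine hG.1 (hasMinor_of_contract_matching (u := vs ∘ ![l, l', p, q, r])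
    (x := ![v, w, X p q, X q r, X r p]) (h.injective.comp he) ?_
    (fun i j => (h.ne_of_adj (hx j).choose_spec _).symm) (fun i => ?_) fun i j hij => ?_)
  · simp only [Matrix.vecCons, Fin.cons_injective_iff]
    simp [hwv.symm, hXw.1.symm, hXw.2.1.symm, hXw.2.2.symm, (h.mid_ne_apex hpq).symm,
      (h.mid_ne_apex hqr).symm, (h.mid_ne_apex hrp).symm, hxy, hyz, hzx.symm,
      injective_of_subsingleton]
  · fin_cases i
    exacts [(h.adj_apex l).symm, hw l', h.adj_mid_left hpq, h.adj_mid_left hqr,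
      h.adj_mid_left hrp]
  · fin_cases i <;> fin_cases j <;> simp at hij ⊢ <;>
      first
        | exact Or.inl (h.adj_apex _) | exact Or.inr (h.adj_apex _)
        | exact Or.inl (hw _).symm | exact Or.inr (hw _).symm
        | exact Or.inl (h.adj_mid_right ‹_›).symm | exact Or.inr (h.adj_mid_right ‹_›).symm

end PairwiseLinked

end IndependentNeighbors

lemma exists_three_eq_of_two_mul_card_lt {ι κ : Type} [Fintype ι] [DecidableEq κ] {f : ι → κ}
    {T : Finset κ} (hf : ∀ i, f i ∈ T) (h : 2 * T.card < Fintype.card ι) :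
    ∃ p q r, p ≠ q ∧ q ≠ r ∧ r ≠ p ∧ f q = f p ∧ f r = f p := by
  obtain ⟨y, -, hy⟩ := Finset.exists_lt_card_fiber_of_mul_lt_card_of_maps_to
    (s := Finset.univ) (fun i _ => hf i) (by rwa [mul_comm, Finset.card_univ])
  obtain ⟨p, q, r, hp, hq, hr, hpq, hpr, hqr⟩ := Finset.two_lt_card_iff.1 hy
  simp only [Finset.mem_filter, Finset.mem_univ, true_and] at hp hq hr
  exact ⟨p, q, r, hpq, hqr, hpr.symm, hq.trans hp.symm, hr.trans hp.symm⟩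

lemma exists_injective_vecCons_of_five_le_card {ι : Type} [Fintype ι] [DecidableEq ι]
    (hι : 5 ≤ Fintype.card ι) {p q r : ι} (hpq : p ≠ q) (hqr : q ≠ r) (hrp : r ≠ p) :
    ∃ l l', Injective ![l, l', p, q, r] := by
  have : 1 < (Finset.univ \ {p, q, r}).card := by
    have := Finset.card_le_three (a := p) (b := q) (c := r)
    rw [Finset.card_sdiff_of_subset (Finset.subset_univ _), Finset.card_univ]
    omega
  obtain ⟨l, l', hl, hl', hll'⟩ := Finset.one_lt_card_iff.1 this
  simp only [Finset.mem_sdiff, Finset.mem_univ, Finset.mem_insert, Finset.mem_singleton,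
    true_and, not_or] at hl hl'
  refine ⟨l, l', ?_⟩
  simp only [Matrix.vecCons, Fin.cons_injective_iff]
  simp [*, hrp.symm, injective_of_subsingleton]

noncomputable def adjacencyTypes (m n : ℕ) : Finset ℤ := (Finset.Icc (-(m : ℤ)) (m + n)).erase 0

lemma card_adjacencyTypes (m n : ℕ) : (adjacencyTypes m n).card = 2 * m + n := by
  rw [adjacencyTypes, Finset.card_erase_of_mem (by simp; omega), Int.card_Icc]
  omega

lemma CMG.lab_mem_adjacencyTypes {V : Type} {m n : ℕ} (H : CMG V m n) {u w : V}
    (h : H.G.Adj u w) : H.lab u w ∈ adjacencyTypes m n := by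
  rcases H.lab_mem h with ⟨h₁, h₂⟩ | ⟨h₁, h₂⟩ <;> simp [adjacencyTypes] <;> omega

theorem independent_agreeing_good_vertices_bound {V : Type} (m n : ℕ)
    (hp : 3 ≤ 2 * m + n) (H : CMG V m n) (hpl : IsPlanar H.G) (v : V) (α : ℤ)
    (t : ℕ) (vs : Fin t → V) (hinj : Function.Injective vs)
    (hindep : ∀ i j, i ≠ j → ¬ H.G.Adj (vs i) (vs j))
    (hnbr : ∀ i, H.G.Adj v (vs i) ∧ H.lab v (vs i) = α)
    (hsee : ∀ i j, i ≠ j → ∃ x : V, x ≠ v ∧ H.G.Adj (vs i) x ∧ H.G.Adj (vs j) x ∧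
      H.lab (vs i) x ≠ H.lab (vs j) x) :
    t ≤ 2 * (2 * m + n) := by
  by_contra! ht
  have hsee' : ∀ i j, ∃ x : V, i ≠ j → x ≠ v ∧ H.G.Adj (vs i) x ∧ H.G.Adj (vs j) x ∧
      H.lab (vs i) x ≠ H.lab (vs j) x := fun i j =>
    if hij : i = j then ⟨v, fun h => (h hij).elim⟩ else (hsee i j hij).imp fun _ hx _ => hx
  choose X hX using hsee'
  have h : PairwiseLinked H.G v vs X := ⟨hinj, hindep, fun i => (hnbr i).1,
    fun _ _ hij => (hX _ _ hij).1, fun _ _ hij => (hX _ _ hij).2.1,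
    fun _ _ hij => (hX _ _ hij).2.2.1⟩
  obtain ⟨w, hwv, b, hb, hw⟩ := h.exists_adj_three hpl (Fin.castLE_injective (by omega : 5 ≤ t))
  replace hw := h.adj_of_adj_three hpl hwv hb hw
  obtain ⟨p, q, r, hpq, hqr, hrp, hq, hr⟩ := exists_three_eq_of_two_mul_card_lt
    (fun i => H.lab_mem_adjacencyTypes (hw i)) (by rwa [card_adjacencyTypes, Fintype.card_fin])
  obtain ⟨l, l', he⟩ := exists_injective_vecCons_of_five_le_card
    (by rw [Fintype.card_fin]; omega) hpq hqr hrp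
  -- equal labels at `w` rule out `w` as the middle of a special 2-path
  have hmid : ∀ {i j}, (hij : i ≠ j) → H.lab (vs i) w = H.lab (vs j) w → X i j ≠ w :=
    fun hij hlab hXw => (hX _ _ hij).2.2.2 (hXw ▸ hlab)
  rcases h.mid_eq_of_forall_adj hpl hwv hw he with hXw | hXw | hXw
  exacts [hmid hpq hq.symm hXw, hmid hqr (hq.trans hr.symm) hXw, hmid hrp hr hXw]
end
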